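/- arXiv:1610.00999 — 8 statements merged into one kernel-verified Lean document; each statement's English description precedes it below -/
import Mathlib

section
/- For probability measures Q and P on a measurable space with Q absolutely continuous with respect to P, the relative entropy H(Q,P) = E_P[(dQ/dP) log(dQ/dP)] satisfies H(Q,P) = sup { E_Q[Z] - log E_P[exp(Z)] : Z a bounded measurable function }. -/
open MeasureTheory ENNReal NNReal Real Filter Classical

noncomputable section

variable {Ω : Type*} [MeasurableSpace Ω]

/-- Relative entropy `H(Q,P) ∈ [0,∞]`, `+∞` if `Q` is not absolutely continuous w.r.t. `P`. -/
def relEntropy (Q P : Measure Ω) : ℝ≥0∞ :=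
  if Q ≪ P then
    (∫⁻ ω, ENNReal.ofReal ((Q.rnDeriv P ω).toReal * Real.log (Q.rnDeriv P ω).toReal + 1) ∂P) - 1
  else ⊤

/-- Robust relative entropy `H(Q,Pfam) = inf_{P ∈ Pfam} H(Q,P)`. -/
def robustEntropy (Q : Measure Ω) (Pfam : Set (Measure Ω)) : ℝ≥0∞ :=
  ⨅ P ∈ Pfam, relEntropy Q P

/-- Positive part of an extended real, valued in `ℝ≥0∞`. -/
def ePos (x : EReal) : ℝ≥0∞ := if x = ⊤ then ⊤ else ENNReal.ofReal x.toReal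

/-- Expectation `E_Q[X] = E_Q[X⁺] − E_Q[X⁻]` with value `−∞` when `E_Q[X⁻] = +∞`. -/
def eInt (Q : Measure Ω) (X : Ω → ℝ) : EReal :=
  if (∫⁻ ω, ENNReal.ofReal (-(X ω)) ∂Q) = ⊤ then ⊥
  else ((∫⁻ ω, ENNReal.ofReal (X ω) ∂Q : ℝ≥0∞) : EReal)
       - ((∫⁻ ω, ENNReal.ofReal (-(X ω)) ∂Q : ℝ≥0∞) : EReal)

/-- Expectation of an `EReal`-valued function, same convention. -/
def eIntE (Q : Measure Ω) (X : Ω → EReal) : EReal :=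
  if (∫⁻ ω, ePos (-(X ω)) ∂Q) = ⊤ then ⊥
  else ((∫⁻ ω, ePos (X ω) ∂Q : ℝ≥0∞) : EReal) - ((∫⁻ ω, ePos (-(X ω)) ∂Q : ℝ≥0∞) : EReal)

/-- `log E_P[exp X]` for real-valued `X`, valued in `EReal`. -/
def logMGF (P : Measure Ω) (X : Ω → ℝ) : EReal :=
  ENNReal.log (∫⁻ ω, ENNReal.ofReal (Real.exp (X ω)) ∂P)

/-- `log E_P[exp X]` for `EReal`-valued `X`. -/
def logMGFE (P : Measure Ω) (X : Ω → EReal) : EReal :=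
  ENNReal.log (∫⁻ ω, EReal.exp (X ω) ∂P)

/-- A set is `Pfam`-polar if it is null under every `P ∈ Pfam`. -/
def Polar (Pfam : Set (Measure Ω)) (N : Set Ω) : Prop := ∀ P ∈ Pfam, P N = 0

/-- No-arbitrage `NA(Pfam)` for a one-period market with increment `ΔS`. -/
def NA {d : ℕ} (Pfam : Set (Measure Ω)) (ΔS : Ω → Fin d → ℝ) : Prop :=
  ∀ h : Fin d → ℝ, Polar Pfam {ω : Ω | ∑ i, h i * ΔS ω i < 0} →
    Polar Pfam {ω : Ω | ∑ i, h i * ΔS ω i ≠ 0}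

/-- Convexity of a family of measures. -/
def ConvexFamily (Pfam : Set (Measure Ω)) : Prop :=
  ∀ P₁ ∈ Pfam, ∀ P₂ ∈ Pfam, ∀ t : ℝ≥0, t ≤ 1 →
    ((t : ℝ≥0∞) • P₁ + ((1 - t : ℝ≥0) : ℝ≥0∞) • P₂) ∈ Pfam

/-!
Tilting `P` by a bounded `Z` gives the probability measure `P_Z ∝ e^Z P`, and
`KL(Q ‖ P_Z) = KL(Q ‖ P) - E_Q[Z] + log E_P[e^Z]`; Gibbs' inequality `KL(Q ‖ P_Z) ≥ 0` bounds
`E_Q[Z] - log E_P[e^Z]` by `KL(Q ‖ P)`, which is `H(Q,P)` because `x log x + 1 = klFun x + x`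
and `E_P[dQ/dP] = 1`. Conversely, when `log (dQ/dP)` is `Q`-integrable, its clippings to `[-n, n]`
attain `KL(Q ‖ P)` in the limit by dominated convergence; otherwise the truncations
`min (log⁺ (dQ/dP)) n` have `E_Q → ∞` (as `klFun x ≤ x log⁺ x + 1`) while
`E_P[exp] ≤ E_P[dQ/dP + 1] = 2`.
-/

open InformationTheory Topology

lemma ofReal_mul_log_add_one {x : ℝ} (hx : 0 ≤ x) :
    ENNReal.ofReal (x * log x + 1) = ENNReal.ofReal (klFun x) + ENNReal.ofReal x := by
  rw [← ENNReal.ofReal_add (klFun_nonneg hx) hx, klFun_apply]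
  ring_nf

lemma ofReal_klFun_le {x : ℝ} (hx : 0 ≤ x) :
    ENNReal.ofReal (klFun x) ≤ ENNReal.ofReal x * ENNReal.ofReal (log⁺ x) + 1 := by
  rw [← ENNReal.ofReal_mul hx, ← ENNReal.ofReal_one, ← ENNReal.ofReal_add
    (mul_nonneg hx posLog_nonneg) zero_le_one, klFun_apply]
  refine ENNReal.ofReal_le_ofReal ?_
  have h_log : x * log x ≤ x * log⁺ x := mul_le_mul_of_nonneg_left (le_max_right _ _) hx
  linarith

lemma exp_posLog_le {x : ℝ} (hx : 0 ≤ x) : exp (log⁺ x) ≤ x + 1 := by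
  rw [posLog_eq_log_max_one hx, Real.exp_log (by positivity)]
  exact max_le (by linarith) (by linarith)

-- Clipping `x` before taking the logarithm makes `exp (logClamp n x) → x` hold at `x = 0` too,
-- where `log 0 = 0` is a junk value.
def logClamp (n : ℕ) (x : ℝ) : ℝ := log (max (min x (exp n)) (exp (-n)))

lemma exp_logClamp (n : ℕ) (x : ℝ) : exp (logClamp n x) = max (min x (exp n)) (exp (-n)) :=
  exp_log (lt_max_of_lt_right (exp_pos _))

lemma abs_logClamp_le (n : ℕ) (x : ℝ) : |logClamp n x| ≤ n := by
  rw [abs_le, ← exp_le_exp, ← exp_le_exp (x := logClamp n x), exp_logClamp]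
  have hn := n.cast_nonneg (α := ℝ)
  exact ⟨le_max_right _ _, max_le (min_le_right _ _) (exp_le_exp.2 (by linarith))⟩

lemma logClamp_of_pos (n : ℕ) {x : ℝ} (hx : 0 < x) :
    logClamp n x = max (min (log x) n) (-n) := by
  rw [← exp_eq_exp, exp_logClamp, exp_monotone.map_max, exp_monotone.map_min, exp_log hx]

lemma abs_logClamp_le_abs_log (n : ℕ) {x : ℝ} (hx : 0 < x) : |logClamp n x| ≤ |log x| := by
  have hn := n.cast_nonneg (α := ℝ)
  have h_abs := abs_nonneg (log x)
  rw [logClamp_of_pos n hx, abs_le]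
  exact ⟨le_max_of_le_left (le_min (neg_abs_le _) (by linarith)),
    max_le ((min_le_left _ _).trans (le_abs_self _)) (by linarith)⟩

lemma tendsto_logClamp {x : ℝ} (hx : 0 < x) :
    Tendsto (logClamp · x) atTop (𝓝 (log x)) := by
  refine tendsto_const_nhds.congr' ?_
  filter_upwards [eventually_ge_atTop ⌈|log x|⌉₊] with n hn
  have := (abs_le.1 ((Nat.le_ceil _).trans (Nat.cast_le.2 hn)))
  rw [logClamp_of_pos n hx, min_eq_left this.2, max_eq_left this.1]

lemma exp_logClamp_le {x : ℝ} (hx : 0 ≤ x) (n : ℕ) : exp (logClamp n x) ≤ x + 1 := by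
  rw [exp_logClamp]
  exact max_le ((min_le_left _ _).trans (by linarith))
    ((exp_le_one_iff.2 (by simp)).trans (by linarith))

lemma tendsto_exp_logClamp {x : ℝ} (hx : 0 ≤ x) :
    Tendsto (fun n ↦ exp (logClamp n x)) atTop (𝓝 x) := by
  simp_rw [exp_logClamp]
  have h_min : ∀ᶠ n : ℕ in atTop, min x (exp n) = x := by
    filter_upwards [eventually_ge_atTop ⌈x⌉₊] with n hn
    exact min_eq_left (((Nat.le_ceil _).trans (Nat.cast_le.2 hn)).trans
      ((add_one_le_exp _).trans' (by linarith)))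
  have h_lim : Tendsto (fun n : ℕ ↦ max x (exp (-n))) atTop (𝓝 (max x 0)) :=
    tendsto_const_nhds.max (tendsto_exp_neg_atTop_nhds_zero.comp tendsto_natCast_atTop_atTop)
  rw [max_eq_left hx] at h_lim
  exact h_lim.congr' (h_min.mono fun n hn ↦ by simp only [hn])

lemma abs_min_posLog_le (n : ℕ) (x : ℝ) : |min (log⁺ x) n| ≤ n := by
  rw [abs_of_nonneg (le_min posLog_nonneg n.cast_nonneg)]
  exact min_le_right _ _

lemma tendsto_min_natCast (a : ℝ) : Tendsto (fun n : ℕ ↦ min a n) atTop (𝓝 a) :=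
  tendsto_const_nhds.congr' <| (tendsto_natCast_atTop_atTop.eventually_ge_atTop a).mono
    fun _ hn ↦ (min_eq_left hn).symm

section Measures

variable {Q P : Measure Ω}

lemma lintegral_ofReal_toReal_rnDeriv_mul [SigmaFinite Q] [SigmaFinite P] (hQP : Q ≪ P)
    {g : Ω → ℝ≥0∞} (hg : AEMeasurable g P) :
    ∫⁻ ω, ENNReal.ofReal (Q.rnDeriv P ω).toReal * g ω ∂P = ∫⁻ ω, g ω ∂Q := by
  rw [← lintegral_rnDeriv_mul hQP hg]
  refine lintegral_congr_ae ?_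
  filter_upwards [Measure.rnDeriv_lt_top Q P] with ω hω
  rw [ENNReal.ofReal_toReal hω.ne]

lemma relEntropy_eq_klDiv (Q P : Measure Ω) [IsProbabilityMeasure Q] [IsFiniteMeasure P] :
    relEntropy Q P = klDiv Q P := by
  by_cases hQP : Q ≪ P
  · have h_mass : ∫⁻ ω, ENNReal.ofReal (Q.rnDeriv P ω).toReal ∂P = 1 := by
      simpa using lintegral_ofReal_toReal_rnDeriv_mul hQP (g := 1) aemeasurable_const
    rw [relEntropy, if_pos hQP, klDiv_eq_lintegral_klFun_of_ac hQP,
      lintegral_congr fun ω ↦ ofReal_mul_log_add_one ENNReal.toReal_nonneg,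
      lintegral_add_right _ (by fun_prop), h_mass, ENNReal.add_sub_cancel_right ENNReal.one_ne_top]
  · rw [relEntropy, if_neg hQP, klDiv_of_not_ac hQP]

lemma eInt_eq_integral {μ : Measure Ω} {X : Ω → ℝ} (hX : Integrable X μ) :
    eInt μ X = ((∫ ω, X ω ∂μ : ℝ) : EReal) := by
  have h_neg : ∫⁻ ω, ENNReal.ofReal (-X ω) ∂μ ≠ ⊤ := hX.neg.lintegral_lt_top.ne
  rw [eInt, if_neg h_neg, integral_eq_lintegral_pos_part_sub_lintegral_neg_part hX, EReal.coe_sub,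
    EReal.coe_ennreal_toReal h_neg, EReal.coe_ennreal_toReal hX.lintegral_lt_top.ne]

lemma logMGF_eq_log_integral {μ : Measure Ω} [NeZero μ] {X : Ω → ℝ}
    (hX : Integrable (fun ω ↦ exp (X ω)) μ) :
    logMGF μ X = ((log (∫ ω, exp (X ω) ∂μ) : ℝ) : EReal) := by
  rw [logMGF, ← ofReal_integral_eq_lintegral_ofReal hX (ae_of_all _ fun ω ↦ (exp_pos _).le),
    ENNReal.log_ofReal_of_pos (integral_exp_pos hX)]

lemma lintegral_posLog_rnDeriv_eq_top [IsFiniteMeasure Q] [IsFiniteMeasure P] (hQP : Q ≪ P)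
    (h_int : ¬ Integrable (llr Q P) Q) :
    ∫⁻ ω, ENNReal.ofReal (log⁺ (Q.rnDeriv P ω).toReal) ∂Q = ⊤ := by
  have h_top := klDiv_of_not_integrable h_int
  rw [klDiv_eq_lintegral_klFun_of_ac hQP] at h_top
  have h_le : ⊤ ≤ ∫⁻ ω, ENNReal.ofReal (log⁺ (Q.rnDeriv P ω).toReal) ∂Q + P Set.univ := calc
    ⊤ = _ := h_top.symm
    _ ≤ ∫⁻ ω, (ENNReal.ofReal (Q.rnDeriv P ω).toReal *
          ENNReal.ofReal (log⁺ (Q.rnDeriv P ω).toReal) + 1) ∂P :=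
      lintegral_mono fun ω ↦ ofReal_klFun_le ENNReal.toReal_nonneg
    _ = _ := by
      rw [lintegral_add_right _ measurable_const,
        lintegral_ofReal_toReal_rnDeriv_mul hQP (by fun_prop), lintegral_one]
  simpa [measure_ne_top] using h_le

end Measures

def donskerVaradhan (Q P : Measure Ω) (Z : Ω → ℝ) : ℝ :=
  ∫ ω, Z ω ∂Q - log (∫ ω, exp (Z ω) ∂P)

section Bounded

variable {μ : Measure Ω} [IsFiniteMeasure μ] {Z : Ω → ℝ} {C : ℝ}

lemma integrable_of_abs_le (hZ : Measurable Z) (hC : ∀ ω, |Z ω| ≤ C) : Integrable Z μ :=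
  .of_bound hZ.aestronglyMeasurable C (ae_of_all _ hC)

lemma integrable_exp_of_abs_le (hZ : Measurable Z) (hC : ∀ ω, |Z ω| ≤ C) :
    Integrable (fun ω ↦ exp (Z ω)) μ :=
  .of_bound (by fun_prop) (exp C) <| ae_of_all _ fun ω ↦ by
    rw [norm_of_nonneg (exp_pos _).le, exp_le_exp]
    exact (le_abs_self _).trans (hC ω)

end Bounded

section DonskerVaradhan

variable {Q P : Measure Ω} {Z : Ω → ℝ} {C : ℝ}

lemma eInt_sub_logMGF_eq [IsFiniteMeasure Q] [IsFiniteMeasure P] [NeZero P]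
    (hZ : Measurable Z) (hC : ∀ ω, |Z ω| ≤ C) :
    eInt Q Z - logMGF P Z = donskerVaradhan Q P Z := by
  rw [eInt_eq_integral (integrable_of_abs_le hZ hC),
    logMGF_eq_log_integral (integrable_exp_of_abs_le hZ hC), donskerVaradhan, EReal.coe_sub]

variable [IsProbabilityMeasure Q] [IsProbabilityMeasure P]

lemma donskerVaradhan_le_toReal_klDiv (hQP : Q ≪ P) (h_int : Integrable (llr Q P) Q)
    (hZQ : Integrable Z Q) (hZP : Integrable (fun ω ↦ exp (Z ω)) P) :
    donskerVaradhan Q P Z ≤ (klDiv Q P).toReal := by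
  have := isProbabilityMeasure_tilted hZP
  have h_gibbs := ENNReal.toReal_nonneg.trans_eq
    (toReal_klDiv_of_measure_eq (hQP.trans (absolutelyContinuous_tilted hZP)) (by simp))
  rw [integral_llr_tilted_right hQP hZQ hZP h_int] at h_gibbs
  rw [toReal_klDiv_of_measure_eq hQP (by simp), donskerVaradhan]
  linarith

lemma donskerVaradhan_le_klDiv (hZ : Measurable Z) (hC : ∀ ω, |Z ω| ≤ C) :
    (donskerVaradhan Q P Z : EReal) ≤ klDiv Q P := by
  by_cases h_top : klDiv Q P = ⊤
  · simp [h_top]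
  obtain ⟨hQP, h_int⟩ := klDiv_ne_top_iff.1 h_top
  rw [← EReal.coe_ennreal_toReal h_top, EReal.coe_le_coe_iff]
  exact donskerVaradhan_le_toReal_klDiv hQP h_int (integrable_of_abs_le hZ hC)
    (integrable_exp_of_abs_le hZ hC)

lemma tendsto_donskerVaradhan_logClamp (hQP : Q ≪ P) (h_int : Integrable (llr Q P) Q) :
    Tendsto (fun n : ℕ ↦ donskerVaradhan Q P (fun ω ↦ logClamp n (Q.rnDeriv P ω).toReal))
      atTop (𝓝 (klDiv Q P).toReal) := by
  have h_meas (n : ℕ) : Measurable fun ω ↦ logClamp n (Q.rnDeriv P ω).toReal := by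
    unfold logClamp; fun_prop
  have h_pos : ∀ᵐ ω ∂Q, 0 < (Q.rnDeriv P ω).toReal := by
    filter_upwards [Measure.rnDeriv_pos hQP, hQP.ae_le (Measure.rnDeriv_lt_top Q P)] with ω h0 hω
    exact ENNReal.toReal_pos h0.ne' hω.ne
  have h_Q : Tendsto (fun n : ℕ ↦ ∫ ω, logClamp n (Q.rnDeriv P ω).toReal ∂Q) atTop
      (𝓝 (∫ ω, llr Q P ω ∂Q)) :=
    tendsto_integral_of_dominated_convergence _ (fun n ↦ (h_meas n).aestronglyMeasurable)
      h_int.abs (fun n ↦ h_pos.mono fun ω hω ↦ abs_logClamp_le_abs_log n hω)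
      (h_pos.mono fun ω hω ↦ tendsto_logClamp hω)
  have h_P : Tendsto (fun n : ℕ ↦ ∫ ω, exp (logClamp n (Q.rnDeriv P ω).toReal) ∂P) atTop
      (𝓝 1) := by
    have h_lim := tendsto_integral_of_dominated_convergence _
      (fun n ↦ (h_meas n).exp.aestronglyMeasurable)
      (Measure.integrable_toReal_rnDeriv.add (integrable_const 1))
      (fun n ↦ ae_of_all _ fun ω ↦ by
        rw [norm_of_nonneg (exp_pos _).le]
        exact exp_logClamp_le ENNReal.toReal_nonneg n)
      (ae_of_all _ fun ω ↦ tendsto_exp_logClamp ENNReal.toReal_nonneg)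
    rwa [Measure.integral_toReal_rnDeriv hQP, probReal_univ] at h_lim
  rw [toReal_klDiv_of_measure_eq hQP (by simp), ← sub_zero (∫ ω, llr Q P ω ∂Q), ← Real.log_one]
  exact h_Q.sub ((continuousAt_log one_ne_zero).tendsto.comp h_P)

lemma tendsto_donskerVaradhan_min_posLog (hQP : Q ≪ P) (h_int : ¬ Integrable (llr Q P) Q) :
    Tendsto (fun n : ℕ ↦ donskerVaradhan Q P (fun ω ↦ min (log⁺ (Q.rnDeriv P ω).toReal) n))
      atTop atTop := by
  have h_meas (n : ℕ) : Measurable fun ω ↦ min (log⁺ (Q.rnDeriv P ω).toReal) n := by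
    fun_prop
  have h_bdd (n : ℕ) (ω : Ω) := abs_min_posLog_le n (Q.rnDeriv P ω).toReal
  have h_lint : Tendsto (fun n : ℕ ↦ ∫⁻ ω, ENNReal.ofReal (min (log⁺ (Q.rnDeriv P ω).toReal) n) ∂Q)
      atTop (𝓝 ⊤) := by
    rw [← lintegral_posLog_rnDeriv_eq_top hQP h_int]
    exact lintegral_tendsto_of_tendsto_of_monotone
      (fun n ↦ (h_meas n).ennreal_ofReal.aemeasurable)
      (ae_of_all _ fun ω m n hmn ↦ ENNReal.ofReal_le_ofReal (min_le_min_left _ (Nat.cast_le.2 hmn)))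
      (ae_of_all _ fun ω ↦ (ENNReal.continuous_ofReal.tendsto _).comp (tendsto_min_natCast _))
  have h_Q : Tendsto (fun n : ℕ ↦ ∫ ω, min (log⁺ (Q.rnDeriv P ω).toReal) n ∂Q) atTop atTop :=
    ENNReal.tendsto_ofReal_nhds_top.1 <| h_lint.congr fun n ↦
      (ofReal_integral_eq_lintegral_ofReal (integrable_of_abs_le (h_meas n) (h_bdd n))
        (ae_of_all _ fun ω ↦ le_min posLog_nonneg n.cast_nonneg)).symm
  have h_P (n : ℕ) : log (∫ ω, exp (min (log⁺ (Q.rnDeriv P ω).toReal) n) ∂P) ≤ Real.log 2 := by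
    have h_exp_int := integrable_exp_of_abs_le (μ := P) (h_meas n) (h_bdd n)
    refine log_le_log (integral_exp_pos h_exp_int) ?_
    calc ∫ ω, exp (min (log⁺ (Q.rnDeriv P ω).toReal) n) ∂P
        ≤ ∫ ω, ((Q.rnDeriv P ω).toReal + 1) ∂P :=
          integral_mono h_exp_int (Measure.integrable_toReal_rnDeriv.add (integrable_const 1))
            fun ω ↦ (exp_le_exp.2 (min_le_left _ _)).trans (exp_posLog_le ENNReal.toReal_nonneg)
      _ = 2 := by
          rw [integral_add Measure.integrable_toReal_rnDeriv (integrable_const 1),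
            Measure.integral_toReal_rnDeriv hQP]
          norm_num
  refine tendsto_atTop_mono (fun n ↦ ?_) (tendsto_atTop_add_const_right _ (-Real.log 2) h_Q)
  rw [donskerVaradhan]
  linarith [h_P n]

lemma exists_tendsto_donskerVaradhan_klDiv (hQP : Q ≪ P) :
    ∃ Z : ℕ → Ω → ℝ, (∀ n, Measurable (Z n) ∧ ∃ C : ℝ, ∀ ω, |Z n ω| ≤ C) ∧
      Tendsto (fun n ↦ (donskerVaradhan Q P (Z n) : EReal)) atTop (𝓝 (klDiv Q P)) := by
  by_cases h_int : Integrable (llr Q P) Q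
  · refine ⟨fun n ω ↦ logClamp n (Q.rnDeriv P ω).toReal,
      fun n ↦ ⟨by unfold logClamp; fun_prop, n, fun ω ↦ abs_logClamp_le n _⟩, ?_⟩
    rw [← EReal.coe_ennreal_toReal (klDiv_ne_top hQP h_int)]
    exact (continuous_coe_real_ereal.tendsto _).comp (tendsto_donskerVaradhan_logClamp hQP h_int)
  · refine ⟨fun n ω ↦ min (log⁺ (Q.rnDeriv P ω).toReal) n,
      fun n ↦ ⟨by fun_prop, n, fun ω ↦ abs_min_posLog_le n _⟩, ?_⟩
    rw [klDiv_of_not_integrable h_int, EReal.coe_ennreal_top]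
    exact EReal.tendsto_coe_nhds_top_iff.2 (tendsto_donskerVaradhan_min_posLog hQP h_int)

end DonskerVaradhan

/-- The relative entropy admits the variational representation
`H(Q,P) = sup { E_Q[Z] − log E_P[exp Z] : Z bounded measurable }`. -/
theorem relEntropy_eq_iSup_bounded_measurable
    (Q P : Measure Ω) [IsProbabilityMeasure Q] [IsProbabilityMeasure P] (hQP : Q ≪ P) :
    (relEntropy Q P : EReal) =
      ⨆ (Z : Ω → ℝ) (_ : Measurable Z ∧ ∃ C : ℝ, ∀ ω, |Z ω| ≤ C),
        (eInt Q Z - logMGF P Z) := by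
  rw [relEntropy_eq_klDiv]
  refine le_antisymm ?_ (iSup₂_le fun Z ⟨hZ, _, hC⟩ ↦
    (eInt_sub_logMGF_eq hZ hC).trans_le (donskerVaradhan_le_klDiv hZ hC))
  obtain ⟨Z, hZ, h_lim⟩ := exists_tendsto_donskerVaradhan_klDiv hQP
  refine le_of_tendsto' h_lim fun n ↦ le_iSup₂_of_le (Z n) (hZ n) ?_
  obtain ⟨hZ_meas, _, hC⟩ := hZ n
  exact (eInt_sub_logMGF_eq hZ_meas hC).ge

end
end

section
/- Let V, W be Polish spaces and P = μ ⊗ K, Q = μ' ⊗ K' probability measures on V × W with μ,μ' ∈ 𝔓(V) and K, K' universally measurable kernels from V to 𝔓(W). Then Q ≪ P if and only if μ' ≪ μ and K'(v) ≪ K(v) for μ'-almost every v ∈ V. -/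
open MeasureTheory ENNReal NNReal Real Filter Classical
open scoped ProbabilityTheory

noncomputable section

variable {Ω : Type*} [MeasurableSpace Ω]

theorem compProd_absolutelyContinuous_iff_general
    {V W : Type*} [MeasurableSpace V]
    [MeasurableSpace W] [TopologicalSpace W] [PolishSpace W] [BorelSpace W]
    (μ μ' : Measure V) [IsProbabilityMeasure μ] [IsProbabilityMeasure μ']
    (K K' : ProbabilityTheory.Kernel V W)
    [ProbabilityTheory.IsMarkovKernel K] [ProbabilityTheory.IsMarkovKernel K'] :
    (μ' ⊗ₘ K') ≪ (μ ⊗ₘ K) ↔ μ' ≪ μ ∧ ∀ᵐ v ∂μ', K' v ≪ K v :=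
  Measure.absolutelyContinuous_compProd_iff'

/-- Absolute continuity of product measures through their disintegration:
`μ' ⊗ K' ≪ μ ⊗ K` iff `μ' ≪ μ` and `K'(v) ≪ K(v)` for `μ'`-almost every `v`. -/
theorem compProd_absolutelyContinuous_iff
    {V W : Type*} [MeasurableSpace V] [TopologicalSpace V] [PolishSpace V] [BorelSpace V]
    [MeasurableSpace W] [TopologicalSpace W] [PolishSpace W] [BorelSpace W]
    (μ μ' : Measure V) [IsProbabilityMeasure μ] [IsProbabilityMeasure μ']
    (K K' : ProbabilityTheory.Kernel V W)
    [ProbabilityTheory.IsMarkovKernel K] [ProbabilityTheory.IsMarkovKernel K'] :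
    (μ' ⊗ₘ K') ≪ (μ ⊗ₘ K) ↔ μ' ≪ μ ∧ ∀ᵐ v ∂μ', K' v ≪ K v :=
  compProd_absolutelyContinuous_iff_general μ μ' K K'

end
end

section
/- Let V, W be Polish spaces. The map (Q, P, w) ↦ (dQ/dP)(w), where dQ/dP denotes the Radon–Nikodym density of the absolutely continuous part of Q with respect to P, is jointly Borel measurable as a function on 𝔓(W) × 𝔓(W) × W. -/
open MeasureTheory ENNReal NNReal Real Filter Classical

noncomputable section

variable {Ω : Type*} [MeasurableSpace Ω]

/-! Since `μ ↦ μ G` is lower semicontinuous in the weak topology for open `G` (portmanteau), the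
coercion `𝔓(W) → Measure W` is Borel measurable, so `(Q, P) ↦ Q` and `(Q, P) ↦ P` are Markov
kernels from `𝔓(W) × 𝔓(W)` to `W`. As `W` is countably generated, the Radon–Nikodym derivative
of one kernel with respect to another is jointly measurable and is, at each parameter, a version
of the Radon–Nikodym derivative of the measures. -/

open Topology ProbabilityTheory

namespace MeasureTheory.ProbabilityMeasure

variable {X : Type*} [TopologicalSpace X] [MeasurableSpace X] [HasOuterApproxClosed X]

lemma lowerSemicontinuous_apply_of_isOpen [OpensMeasurableSpace X] {G : Set X} (hG : IsOpen G) :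
    LowerSemicontinuous fun μ : ProbabilityMeasure X ↦ (μ : Measure X) G := fun μ _ hlt ↦
  eventually_lt_of_lt_liminf <| hlt.trans_le <| le_liminf_measure_open_of_tendsto tendsto_id hG

section Borel

variable [BorelSpace X] [MeasurableSpace (ProbabilityMeasure X)]
  [OpensMeasurableSpace (ProbabilityMeasure X)]

lemma measurable_toMeasure : Measurable ((↑) : ProbabilityMeasure X → Measure X) :=
  .measure_of_isPiSystem_of_isProbabilityMeasure BorelSpace.measurable_eq isPiSystem_isOpen
    fun _ hG ↦ (lowerSemicontinuous_apply_of_isOpen hG).measurable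

def toKernel : Kernel (ProbabilityMeasure X) X := ⟨(↑), measurable_toMeasure⟩

instance : IsMarkovKernel (toKernel (X := X)) := ⟨fun μ ↦ μ.2⟩

end Borel

end MeasureTheory.ProbabilityMeasure

/-- Doob's jointly measurable version of the Radon–Nikodym derivative: on a Polish space
there is a Borel function `(Q,P,w) ↦ f(Q,P,w)` that is, for each pair `(Q,P)`, a version of
the density of the absolutely continuous part of `Q` with respect to `P`. -/
theorem exists_measurable_rnDeriv_version
    {W : Type*} [TopologicalSpace W] [PolishSpace W] [MeasurableSpace W] [BorelSpace W]
    [MeasurableSpace (ProbabilityMeasure W)] [BorelSpace (ProbabilityMeasure W)] :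
    ∃ f : ProbabilityMeasure W × ProbabilityMeasure W × W → ℝ≥0∞,
      Measurable f ∧
      ∀ Q P : ProbabilityMeasure W,
        (fun w => f (Q, P, w)) =ᵐ[(P : Measure W)]
          (Q : Measure W).rnDeriv (P : Measure W) := by
  -- a metric on `W` provides the `HasOuterApproxClosed` instance needed by `toKernel`
  let := TopologicalSpace.upgradeIsCompletelyMetrizable W
  let κ : Kernel (ProbabilityMeasure W × ProbabilityMeasure W) W :=
    ProbabilityMeasure.toKernel.comap Prod.fst measurable_fst
  let η : Kernel (ProbabilityMeasure W × ProbabilityMeasure W) W :=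
    ProbabilityMeasure.toKernel.comap Prod.snd measurable_snd
  refine ⟨fun x ↦ κ.rnDeriv η (x.1, x.2.1) x.2.2, ?_, fun Q P ↦ ?_⟩
  · exact (κ.measurable_rnDeriv η).comp MeasurableEquiv.prodAssoc.symm.measurable
  · exact Kernel.rnDeriv_eq_rnDeriv_measure (a := (Q, P))

end
end

section
/- Continuity from below of the one-period robust exponential problem: if X_n : Ω → (−∞,+∞] is a sequence of measurable functions increasing pointwise to X, then sup over n of inf over h ∈ ℝ^d of sup over P ∈ 𝒫 of log E_P[exp(X_n + h·ΔS)] equals inf over h ∈ ℝ^d of sup over P ∈ 𝒫 of log E_P[exp(X + h·ΔS)]. -/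
open MeasureTheory ENNReal NNReal Real Filter Classical

noncomputable section

variable {Ω : Type*} [MeasurableSpace Ω]

/-!
Since `ENNReal.log` is an order isomorphism, it suffices to treat the moments
`E_P[exp(X + h·ΔS)]` in `ℝ≥0∞`. If `hₙ` is almost optimal for `Xₙ`,
first remove from `hₙ` its component along the directions whose gain vanishes quasi-surely; this
changes no expectation. The remaining strategies are bounded: otherwise a normalized subsequence
converges to a direction `v` that is not quasi-surely null, so by no-arbitrage `v·ΔS > 0` with
positive probability under some `P`, and Fatou's lemma forces `E_P[exp(X₀ + hₙ·ΔS)]` to blow up.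
A convergent subsequence of the bounded strategies then gives an almost optimal strategy for `X`,
by Fatou's lemma in the strategy and monotone convergence in `n`.
-/

open Topology Bornology Matrix

lemma ENNReal.log_iSup {ι : Sort*} (f : ι → ℝ≥0∞) :
    ENNReal.log (⨆ i, f i) = ⨆ i, ENNReal.log (f i) :=
  ENNReal.logOrderIso.map_iSup f

lemma ENNReal.log_iInf {ι : Sort*} (f : ι → ℝ≥0∞) :
    ENNReal.log (⨅ i, f i) = ⨅ i, ENNReal.log (f i) :=
  ENNReal.logOrderIso.map_iInf f

lemma EReal.exp_iSup {ι : Sort*} (f : ι → EReal) : EReal.exp (⨆ i, f i) = ⨆ i, EReal.exp (f i) :=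
  EReal.expOrderIso.map_iSup f

lemma exists_tendsto_norm_atTop_of_not_isBounded {E : Type*} [NormedAddCommGroup E]
    [NormedSpace ℝ E] [ProperSpace E] {s : Set E} (hs : ¬IsBounded s) :
    ∃ x : ℕ → E, ∃ v : E, (∀ k, x k ∈ s) ∧ ‖v‖ = 1 ∧ Tendsto (fun k => ‖x k‖) atTop atTop ∧
      Tendsto (fun k => ‖x k‖⁻¹ • x k) atTop (𝓝 v) := by
  have hlarge : ∀ C : ℝ, ∃ x ∈ s, C < ‖x‖ := by
    simpa [isBounded_iff_forall_norm_le] using hs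
  choose x hxs hxk using fun k : ℕ => hlarge k
  have hx0 : ∀ k, x k ≠ 0 := fun k => norm_pos_iff.mp ((Nat.cast_nonneg k).trans_lt (hxk k))
  have hsphere : ∀ k, ‖x k‖⁻¹ • x k ∈ Metric.sphere (0 : E) 1 := fun k => by
    simp [norm_smul, hx0 k]
  obtain ⟨v, hv, ψ, hψ, hlim⟩ := (isCompact_sphere (0 : E) 1).tendsto_subseq hsphere
  refine ⟨x ∘ ψ, v, fun k => hxs _, by simpa using hv, ?_, hlim⟩
  refine tendsto_atTop_mono (fun k => ?_) tendsto_natCast_atTop_atTop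
  exact (Nat.cast_le.mpr (hψ.id_le k)).trans (hxk (ψ k)).le

section ExpMoment

variable {ι : Type*} [Fintype ι] {ΔS : Ω → ι → ℝ} {P : Measure Ω}

def expMoment (ΔS : Ω → ι → ℝ) (Y : Ω → EReal) (P : Measure Ω) (h : ι → ℝ) : ℝ≥0∞ :=
  ∫⁻ ω, EReal.exp (Y ω) * ENNReal.ofReal (Real.exp (h ⬝ᵥ ΔS ω)) ∂P

lemma logMGFE_add_dotProduct (P : Measure Ω) (Y : Ω → EReal) (h : ι → ℝ) :
    logMGFE P (fun ω => Y ω + ((h ⬝ᵥ ΔS ω : ℝ) : EReal)) = ENNReal.log (expMoment ΔS Y P h) := by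
  simp only [logMGFE, expMoment, EReal.exp_add, EReal.exp_coe]

lemma measurable_dotProduct_left (hΔS : Measurable ΔS) (h : ι → ℝ) :
    Measurable fun ω => h ⬝ᵥ ΔS ω :=
  (continuous_const.dotProduct continuous_id).measurable.comp hΔS

lemma measurable_expMoment_integrand (hΔS : Measurable ΔS) {Y : Ω → EReal} (hY : Measurable Y)
    (h : ι → ℝ) : Measurable fun ω => EReal.exp (Y ω) * ENNReal.ofReal (Real.exp (h ⬝ᵥ ΔS ω)) :=
  (EReal.measurable_exp.comp hY).mul
    (Real.measurable_exp.comp (measurable_dotProduct_left hΔS h)).ennreal_ofReal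

lemma expMoment_mono_left {Y Z : Ω → EReal} (hYZ : Y ≤ Z) (P : Measure Ω) (h : ι → ℝ) :
    expMoment ΔS Y P h ≤ expMoment ΔS Z P h :=
  lintegral_mono fun ω => mul_le_mul_left (EReal.exp_monotone (hYZ ω)) _

lemma expMoment_add_of_ae_eq_zero {p : ι → ℝ} (hp : ∀ᵐ ω ∂P, p ⬝ᵥ ΔS ω = 0) (Y : Ω → EReal)
    (q : ι → ℝ) : expMoment ΔS Y P (p + q) = expMoment ΔS Y P q :=
  lintegral_congr_ae (hp.mono fun ω hω => by simp only [add_dotProduct, hω, zero_add])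

lemma iSup_expMoment (hΔS : Measurable ΔS) {Xn : ℕ → Ω → EReal} (hXn : ∀ n, Measurable (Xn n))
    (hmono : ∀ ω, Monotone fun n => Xn n ω) {X : Ω → EReal} (hlim : ∀ ω, ⨆ n, Xn n ω = X ω)
    (P : Measure Ω) (h : ι → ℝ) : ⨆ n, expMoment ΔS (Xn n) P h = expMoment ΔS X P h := by
  simp only [expMoment]
  rw [← lintegral_iSup (fun n => measurable_expMoment_integrand hΔS (hXn n) h)
    fun m n hmn ω => mul_le_mul_left (EReal.exp_monotone (hmono ω hmn)) _]
  congr with ω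
  rw [← ENNReal.iSup_mul, ← EReal.exp_iSup, hlim]

lemma expMoment_le_liminf (hΔS : Measurable ΔS) {Y : Ω → EReal} (hY : Measurable Y)
    {h : ℕ → ι → ℝ} {h₀ : ι → ℝ} (hh : Tendsto h atTop (𝓝 h₀)) :
    expMoment ΔS Y P h₀ ≤ liminf (fun k => expMoment ΔS Y P (h k)) atTop := by
  refine (lintegral_congr fun ω => ?_).trans_le
    (lintegral_liminf_le fun k => measurable_expMoment_integrand hΔS hY (h k))
  have hgain : Tendsto (fun k => h k ⬝ᵥ ΔS ω) atTop (𝓝 (h₀ ⬝ᵥ ΔS ω)) :=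
    ((continuous_id.dotProduct continuous_const).tendsto h₀).comp hh
  refine (Tendsto.liminf_eq ?_).symm
  exact ENNReal.Tendsto.const_mul
    (ENNReal.tendsto_ofReal ((Real.continuous_exp.tendsto _).comp hgain))
    (Or.inl (ENNReal.ofReal_pos.mpr (Real.exp_pos _)).ne')

lemma liminf_expMoment_smul_eq_top (hΔS : Measurable ΔS) {Y : Ω → EReal} (hY : Measurable Y)
    (hYbot : ∀ ω, Y ω ≠ ⊥) {v : ι → ℝ} (hv : P {ω | 0 < v ⬝ᵥ ΔS ω} ≠ 0) {t : ℕ → ℝ}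
    (ht : Tendsto t atTop atTop) {u : ℕ → ι → ℝ} (hu : Tendsto u atTop (𝓝 v)) :
    liminf (fun k => expMoment ΔS Y P (t k • u k)) atTop = ⊤ := by
  set S := {ω | 0 < v ⬝ᵥ ΔS ω}
  have hS : MeasurableSet S := measurableSet_lt measurable_const (measurable_dotProduct_left hΔS v)
  have hblowup : ∀ ω ∈ S, Tendsto
      (fun k => EReal.exp (Y ω) * ENNReal.ofReal (Real.exp ((t k • u k) ⬝ᵥ ΔS ω))) atTop (𝓝 ⊤) := by
    intro ω hω
    have hgain : Tendsto (fun k => (t k • u k) ⬝ᵥ ΔS ω) atTop atTop := by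
      simp only [smul_dotProduct, smul_eq_mul]
      exact ht.atTop_mul_pos hω (((continuous_id.dotProduct continuous_const).tendsto v).comp hu)
    have := ENNReal.Tendsto.const_mul (a := EReal.exp (Y ω))
      (ENNReal.tendsto_ofReal_atTop.comp (Real.tendsto_exp_atTop.comp hgain)) (Or.inl top_ne_zero)
    rwa [ENNReal.mul_top (EReal.exp_eq_zero_iff.not.mpr (hYbot ω))] at this
  refine eq_top_iff.mpr ?_
  calc ⊤ = ∫⁻ ω, S.indicator (fun _ => ⊤) ω ∂P := by
        rw [lintegral_indicator_const hS, ENNReal.top_mul hv]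
    _ ≤ ∫⁻ ω, liminf (fun k =>
          EReal.exp (Y ω) * ENNReal.ofReal (Real.exp ((t k • u k) ⬝ᵥ ΔS ω))) atTop ∂P :=
        lintegral_mono (Set.indicator_le fun ω hω => (hblowup ω hω).liminf_eq.ge)
    _ ≤ _ := lintegral_liminf_le fun k => measurable_expMoment_integrand hΔS hY _

lemma expMoment_le_of_tendsto (hΔS : Measurable ΔS) {Xn : ℕ → Ω → EReal}
    (hXn : ∀ n, Measurable (Xn n)) (hmono : ∀ ω, Monotone fun n => Xn n ω) {X : Ω → EReal}
    (hlim : ∀ ω, ⨆ n, Xn n ω = X ω) {φ : ℕ → ℕ} (hφ : Tendsto φ atTop atTop)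
    {h : ℕ → ι → ℝ} {h₀ : ι → ℝ} (hh : Tendsto h atTop (𝓝 h₀)) {b : ℝ≥0∞}
    (hb : ∀ k, expMoment ΔS (Xn (φ k)) P (h k) ≤ b) : expMoment ΔS X P h₀ ≤ b := by
  rw [← iSup_expMoment hΔS hXn hmono hlim]
  refine iSup_le fun m => (expMoment_le_liminf hΔS (hXn m) hh).trans
    (liminf_le_of_frequently_le' (Eventually.frequently ?_))
  filter_upwards [hφ.eventually_ge_atTop m] with k hk
  exact (expMoment_mono_left (fun ω => hmono ω hk) P _).trans (hb k)

end ExpMoment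

def nullDirections {ι : Type*} [Fintype ι] (Pfam : Set (Measure Ω)) (ΔS : Ω → ι → ℝ) :
    Submodule ℝ (ι → ℝ) where
  carrier := {h | ∀ P ∈ Pfam, ∀ᵐ ω ∂P, h ⬝ᵥ ΔS ω = 0}
  add_mem' hx hy P hP := (hx P hP).mp ((hy P hP).mono fun ω hy hx => by
    simp only [add_dotProduct, hx, hy, add_zero])
  zero_mem' _ _ := ae_of_all _ fun ω => zero_dotProduct (ΔS ω)
  smul_mem' c x hx P hP := (hx P hP).mono fun ω hω => by
    simp only [smul_dotProduct, hω, smul_zero]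

namespace NA

variable {d : ℕ} {Pfam : Set (Measure Ω)} {ΔS : Ω → Fin d → ℝ}

lemma exists_measure_pos_of_notMem (hNA : NA Pfam ΔS) {v : Fin d → ℝ}
    (hv : v ∉ nullDirections Pfam ΔS) : ∃ P ∈ Pfam, P {ω | 0 < v ⬝ᵥ ΔS ω} ≠ 0 := by
  by_contra! hnull
  have hpolar := hNA (-v) fun P hP => by
    simpa [dotProduct, Finset.sum_neg_distrib] using hnull P hP
  exact hv fun P hP => ae_iff.mpr (by simpa [dotProduct, Finset.sum_neg_distrib] using hpolar P hP)

theorem isBounded_sublevel_inter (hNA : NA Pfam ΔS) (hΔS : Measurable ΔS)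
    {L' : Submodule ℝ (Fin d → ℝ)} (hL' : Disjoint (nullDirections Pfam ΔS) L')
    {Y : Ω → EReal} (hY : Measurable Y) (hYbot : ∀ ω, Y ω ≠ ⊥) {b : ℝ≥0∞} (hb : b ≠ ⊤) :
    IsBounded {h | h ∈ L' ∧ ⨆ P ∈ Pfam, expMoment ΔS Y P h ≤ b} := by
  by_contra hunbdd
  obtain ⟨x, v, hx, hv, hnorm, hdir⟩ := exists_tendsto_norm_atTop_of_not_isBounded hunbdd
  have hvL' : v ∈ L' := L'.closed_of_finiteDimensional.mem_of_tendsto hdir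
    (Eventually.of_forall fun k => L'.smul_mem _ (hx k).1)
  have hvnull : v ∉ nullDirections Pfam ΔS := fun hvnull => by
    simp [Submodule.disjoint_def.mp hL' v hvnull hvL'] at hv
  obtain ⟨P, hP, hpos⟩ := hNA.exists_measure_pos_of_notMem hvnull
  have htop := liminf_expMoment_smul_eq_top hΔS hY hYbot hpos hnorm hdir
  have hx_eq : ∀ k, ‖x k‖ • ‖x k‖⁻¹ • x k = x k := fun k => by
    rcases eq_or_ne (x k) 0 with hk | hk
    · simp [hk]
    · exact smul_inv_smul₀ (norm_ne_zero_iff.mpr hk) _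
  simp only [hx_eq] at htop
  refine hb (eq_top_iff.mpr (htop ▸ liminf_le_of_frequently_le' (Frequently.of_forall fun k => ?_)))
  exact (le_iSup₂ (f := fun P (_ : P ∈ Pfam) => expMoment ΔS Y P (x k)) P hP).trans (hx k).2

theorem exists_iSup_expMoment_le (hNA : NA Pfam ΔS) (hΔS : Measurable ΔS) {Xn : ℕ → Ω → EReal}
    (hXn : ∀ n, Measurable (Xn n)) (hbot : ∀ ω, Xn 0 ω ≠ ⊥)
    (hmono : ∀ ω, Monotone fun n => Xn n ω) {X : Ω → EReal} (hlim : ∀ ω, ⨆ n, Xn n ω = X ω)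
    {b : ℝ≥0∞} (hb : b ≠ ⊤) {h : ℕ → Fin d → ℝ}
    (hh : ∀ n, ⨆ P ∈ Pfam, expMoment ΔS (Xn n) P (h n) ≤ b) :
    ∃ h₀, ⨆ P ∈ Pfam, expMoment ΔS X P h₀ ≤ b := by
  obtain ⟨L', hL'⟩ := (nullDirections Pfam ΔS).exists_isCompl
  have hsplit : ∀ n, ∃ p ∈ nullDirections Pfam ΔS, ∃ q ∈ L', p + q = h n := fun n =>
    Submodule.mem_sup.mp (hL'.sup_eq_top ▸ Submodule.mem_top)
  choose p hp q hq hpq using hsplit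
  have hqb : ∀ n, ⨆ P ∈ Pfam, expMoment ΔS (Xn n) P (q n) ≤ b := fun n => by
    refine le_of_eq_of_le (iSup_congr fun P => iSup_congr fun hP => ?_) (hh n)
    rw [← hpq n, expMoment_add_of_ae_eq_zero (hp n P hP)]
  have hbdd : IsBounded (Set.range q) := by
    refine (hNA.isBounded_sublevel_inter hΔS hL'.disjoint (hXn 0) hbot hb).subset ?_
    rintro _ ⟨n, rfl⟩
    exact ⟨hq n, (iSup₂_mono fun P _ =>
      expMoment_mono_left (fun ω => hmono ω (Nat.zero_le n)) P _).trans (hqb n)⟩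
  obtain ⟨h₀, -, ψ, hψ, hqψ⟩ := tendsto_subseq_of_bounded hbdd (Set.mem_range_self)
  refine ⟨h₀, iSup₂_le fun P hP => ?_⟩
  refine expMoment_le_of_tendsto hΔS hXn hmono hlim hψ.tendsto_atTop hqψ fun k => ?_
  exact (le_iSup₂ (f := fun P (_ : P ∈ Pfam) => expMoment ΔS (Xn (ψ k)) P (q (ψ k))) P hP).trans
    (hqb (ψ k))

theorem iSup_iInf_iSup_expMoment (hNA : NA Pfam ΔS) (hΔS : Measurable ΔS) {Xn : ℕ → Ω → EReal}
    (hXn : ∀ n, Measurable (Xn n)) (hbot : ∀ ω, Xn 0 ω ≠ ⊥)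
    (hmono : ∀ ω, Monotone fun n => Xn n ω) {X : Ω → EReal} (hlim : ∀ ω, ⨆ n, Xn n ω = X ω) :
    ⨆ n, ⨅ h, ⨆ P ∈ Pfam, expMoment ΔS (Xn n) P h = ⨅ h, ⨆ P ∈ Pfam, expMoment ΔS X P h := by
  have hXnX : ∀ n, Xn n ≤ X := fun n ω => hlim ω ▸ le_iSup (fun m => Xn m ω) n
  refine le_antisymm (iSup_le fun n => iInf_mono fun h =>
    iSup₂_mono fun P _ => expMoment_mono_left (hXnX n) P h) ?_
  refine le_of_forall_gt_imp_ge_of_dense fun b hb => ?_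
  rcases eq_or_ne b ⊤ with rfl | hbtop
  · exact le_top
  have hnear : ∀ n, ∃ h, ⨆ P ∈ Pfam, expMoment ΔS (Xn n) P h < b := fun n =>
    iInf_lt_iff.mp ((le_iSup (fun n => ⨅ h, ⨆ P ∈ Pfam, expMoment ΔS (Xn n) P h) n).trans_lt hb)
  choose h hh using hnear
  obtain ⟨h₀, hh₀⟩ :=
    hNA.exists_iSup_expMoment_le hΔS hXn hbot hmono hlim hbtop fun n => (hh n).le
  exact iInf_le_of_le h₀ hh₀

end NA

theorem one_period_continuity_from_below_general {d : ℕ}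
    (Pfam : Set (Measure Ω))
    (ΔS : Ω → Fin d → ℝ) (hΔS : Measurable ΔS) (hNA : NA Pfam ΔS)
    (Xn : ℕ → Ω → EReal) (hXn : ∀ n, Measurable (Xn n)) (hbot : ∀ n ω, Xn n ω ≠ ⊥)
    (hmono : ∀ ω, Monotone fun n => Xn n ω)
    (X : Ω → EReal) (hlim : ∀ ω, (⨆ n, Xn n ω) = X ω) :
    (⨆ n, ⨅ h : Fin d → ℝ, ⨆ P ∈ Pfam,
        logMGFE P (fun ω => Xn n ω + ((∑ i, h i * ΔS ω i : ℝ) : EReal))) =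
      ⨅ h : Fin d → ℝ, ⨆ P ∈ Pfam,
        logMGFE P (fun ω => X ω + ((∑ i, h i * ΔS ω i : ℝ) : EReal)) := by
  have hlog : ∀ (Y : Ω → EReal) (P : Measure Ω) (h : Fin d → ℝ),
      logMGFE P (fun ω => Y ω + ((∑ i, h i * ΔS ω i : ℝ) : EReal)) =
        ENNReal.log (expMoment ΔS Y P h) :=
    fun Y P h => logMGFE_add_dotProduct P Y h
  simp only [hlog, ← ENNReal.log_iSup, ← ENNReal.log_iInf]
  rw [hNA.iSup_iInf_iSup_expMoment hΔS hXn (hbot 0) hmono hlim]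

/-- Continuity from below of the one-period robust exponential problem (Lemma 3.2'):
if `Xₙ ↑ X` pointwise then the optimal values converge. -/
theorem one_period_continuity_from_below {d : ℕ}
    (Pfam : Set (Measure Ω)) (hne : Pfam.Nonempty) (hconv : ConvexFamily Pfam)
    (hprob : ∀ P ∈ Pfam, IsProbabilityMeasure P)
    (ΔS : Ω → Fin d → ℝ) (hΔS : Measurable ΔS) (hNA : NA Pfam ΔS)
    (Xn : ℕ → Ω → EReal) (hXn : ∀ n, Measurable (Xn n)) (hbot : ∀ n ω, Xn n ω ≠ ⊥)
    (hmono : ∀ ω, Monotone fun n => Xn n ω)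
    (X : Ω → EReal) (hlim : ∀ ω, (⨆ n, Xn n ω) = X ω) :
    (⨆ n, ⨅ h : Fin d → ℝ, ⨆ P ∈ Pfam,
        logMGFE P (fun ω => Xn n ω + ((∑ i, h i * ΔS ω i : ℝ) : EReal))) =
      ⨅ h : Fin d → ℝ, ⨆ P ∈ Pfam,
        logMGFE P (fun ω => X ω + ((∑ i, h i * ΔS ω i : ℝ) : EReal)) :=
  one_period_continuity_from_below_general Pfam ΔS hΔS hNA Xn hXn hbot hmono X hlim

end
end

section
/- Existence of an optimal one-period strategy: under NA(𝒫), for any measurable X : Ω → (−∞,+∞] there exists h* ∈ ℝ^d such that sup over P ∈ 𝒫 of log E_P[exp(X + h*·ΔS)] equals inf over h ∈ ℝ^d of sup over P ∈ 𝒫 of log E_P[exp(X + h·ΔS)]. -/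
/-!
The objective `u h = sup_{P ∈ 𝒫} log E_P[exp (X + h·ΔS)]` is lower semicontinuous by Fatou's
lemma and does not change when `h` moves along the subspace `L` of strategies whose gain vanishes
quasi-surely. Fix a complement `W` of `L`. Below `+∞` the sublevel sets of `u` on `W` are bounded:
along an unbounded sequence in such a set the normalised strategies accumulate at some
`g ∈ W \ {0}`, so `g ∉ L`, and NA provides `P ∈ 𝒫` with `P (g·ΔS > 0) > 0`. On that event the
integrands tend to `+∞` (as `X > -∞`), so by Fatou's lemma again `E_P[exp (X + h·ΔS)]` is
unbounded along the sequence. Hence `u` attains its minimum over `W` on a compact sublevel set, and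
by invariance this minimum is the infimum over `ℝ^d`.
-/

open MeasureTheory ENNReal NNReal Real Filter Classical

noncomputable section

variable {Ω : Type*} [MeasurableSpace Ω]

open Topology

theorem LowerSemicontinuousOn.exists_isMinOn_of_isCompact_inter_Iic {α β : Type*}
    [TopologicalSpace α] [LinearOrder β] {f : α → β} {s : Set α} {b : β}
    (hf : LowerSemicontinuousOn f s) (hK : IsCompact (s ∩ f ⁻¹' Set.Iic b))
    (hne : (s ∩ f ⁻¹' Set.Iic b).Nonempty) : ∃ a ∈ s, IsMinOn f s a := by
  obtain ⟨a, ⟨has, hab⟩, hmin⟩ := (hf.mono Set.inter_subset_left).exists_isMinOn hne hK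
  refine ⟨a, has, fun x hx => ?_⟩
  by_cases hxb : f x ≤ b
  · exact hmin ⟨hx, hxb⟩
  · exact hab.trans (le_of_not_ge hxb)

theorem exists_seq_tendsto_norm_atTop_of_not_isBounded {E : Type*} [NormedAddCommGroup E]
    [NormedSpace ℝ E] [ProperSpace E] {K : Set E} (hK : ¬Bornology.IsBounded K) :
    ∃ (w : ℕ → E) (g : E), (∀ n, w n ∈ K) ∧ ‖g‖ = 1 ∧
      Tendsto (fun n => ‖w n‖) atTop atTop ∧ Tendsto (fun n => ‖w n‖⁻¹ • w n) atTop (𝓝 g) := by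
  simp only [isBounded_iff_forall_norm_le, not_exists, not_forall, not_le] at hK
  choose w hwK hw using fun n : ℕ => hK n
  have hsphere : ∀ n, ‖w n‖⁻¹ • w n ∈ Metric.sphere (0 : E) 1 := fun n => by
    simp [norm_smul, ((Nat.cast_nonneg n).trans_lt (hw n)).ne']
  obtain ⟨g, hg, ψ, hψ, hlim⟩ := (isCompact_sphere (0 : E) 1).tendsto_subseq hsphere
  refine ⟨w ∘ ψ, g, fun n => hwK _, by simpa using hg, ?_, hlim⟩
  exact (tendsto_atTop_mono (fun n => (hw n).le) tendsto_natCast_atTop_atTop).comp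
    hψ.tendsto_atTop

theorem Measurable.const_dotProduct {α ι : Type*} [MeasurableSpace α] [Fintype ι]
    {f : α → ι → ℝ} (hf : Measurable f) (v : ι → ℝ) : Measurable fun a => v ⬝ᵥ f a :=
  (continuous_const.dotProduct continuous_id).measurable.comp hf

theorem tendsto_dotProduct_atTop_of_tendsto_smul {ι α : Type*} [Fintype ι] {l : Filter α}
    {w : α → ι → ℝ} {g y : ι → ℝ} (hnorm : Tendsto (fun a => ‖w a‖) l atTop)
    (hlim : Tendsto (fun a => ‖w a‖⁻¹ • w a) l (𝓝 g)) (hgy : 0 < g ⬝ᵥ y) :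
    Tendsto (fun a => w a ⬝ᵥ y) l atTop := by
  have hdot : Tendsto (fun a => (‖w a‖⁻¹ • w a) ⬝ᵥ y) l (𝓝 (g ⬝ᵥ y)) :=
    ((continuous_id.dotProduct continuous_const).tendsto g).comp hlim
  refine (hnorm.atTop_mul_pos hgy hdot).congr' ?_
  filter_upwards [hnorm.eventually_gt_atTop 0] with a ha
  rw [smul_dotProduct, smul_eq_mul, mul_inv_cancel_left₀ ha.ne']

theorem EReal.continuous_exp_add_coe (x : EReal) : Continuous fun r : ℝ => EReal.exp (x + r) :=
  ENNReal.continuous_exp.comp <| continuous_iff_continuousAt.2 fun r =>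
    (EReal.continuousAt_add (Or.inr (EReal.coe_ne_bot r)) (Or.inr (EReal.coe_ne_top r))).comp
      (continuous_const.prodMk continuous_coe_real_ereal).continuousAt

theorem EReal.tendsto_exp_add_coe_atTop {α : Type*} {l : Filter α} {x : EReal} (hx : x ≠ ⊥)
    {r : α → ℝ} (hr : Tendsto r l atTop) : Tendsto (fun a => EReal.exp (x + r a)) l (𝓝 ∞) := by
  have hadd : Tendsto (fun a => x + (r a : EReal)) l (𝓝 ⊤) := by
    have := (EReal.continuousAt_add (p := (x, ⊤)) (Or.inr (by simp)) (Or.inl hx)).tendsto.comp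
      (tendsto_const_nhds.prodMk_nhds (EReal.tendsto_coe_nhds_top_iff.2 hr))
    rwa [EReal.add_top_of_ne_bot hx] at this
  exact EReal.exp_top ▸ (ENNReal.continuous_exp.tendsto ⊤).comp hadd

theorem lowerSemicontinuous_lintegral {α X : Type*} [MeasurableSpace α] [TopologicalSpace X]
    [SequentialSpace X] {μ : Measure α} {f : X → α → ℝ≥0∞} (hf : ∀ x, AEMeasurable (f x) μ)
    (hlsc : ∀ a, LowerSemicontinuous fun x => f x a) :
    LowerSemicontinuous fun x => ∫⁻ a, f x a ∂μ := by
  -- Fatou's lemma only sees sequences, hence the sequential space.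
  refine lowerSemicontinuous_iff_isClosed_preimage.2 fun y => IsSeqClosed.isClosed ?_
  intro u x hu hux
  calc ∫⁻ a, f x a ∂μ ≤ ∫⁻ a, liminf (fun n => f (u n) a) atTop ∂μ :=
        lintegral_mono fun a => ((hlsc a).le_liminf x).trans hux.liminf_le_liminf_comp
    _ ≤ liminf (fun n => ∫⁻ a, f (u n) a ∂μ) atTop := lintegral_liminf_le' fun n => hf (u n)
    _ ≤ y := liminf_le_of_frequently_le' (Frequently.of_forall hu)

theorem liminf_lintegral_eq_top_of_tendsto_top {α ι : Type*} [MeasurableSpace α]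
    {μ : Measure α} {l : Filter ι} [l.IsCountablyGenerated] [l.NeBot] {f : ι → α → ℝ≥0∞}
    {s : Set α} (hf : ∀ i, AEMeasurable (f i) μ) (hs : MeasurableSet s) (hμs : μ s ≠ 0)
    (htop : ∀ x ∈ s, Tendsto (fun i => f i x) l (𝓝 ∞)) :
    liminf (fun i => ∫⁻ x, f i x ∂μ) l = ∞ := by
  refine top_unique ?_
  calc ∞ = ∫⁻ _ in s, ∞ ∂μ := by rw [setLIntegral_const, top_mul hμs]
    _ = ∫⁻ x in s, liminf (fun i => f i x) l ∂μ :=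
        setLIntegral_congr_fun hs fun x hx => (htop x hx).liminf_eq.symm
    _ ≤ ∫⁻ x, liminf (fun i => f i x) l ∂μ := setLIntegral_le_lintegral _ _
    _ ≤ liminf (fun i => ∫⁻ x, f i x ∂μ) l := lintegral_liminf_le' hf

section Market

variable {ι : Type*} [Fintype ι] {Pfam : Set (Measure Ω)} {ΔS : Ω → ι → ℝ} {X : Ω → EReal}

-- The annihilator of the linear span of the quasi-sure support of `ΔS`.
variable (Pfam ΔS) in
def nullStrategies : Submodule ℝ (ι → ℝ) where
  carrier := {h | ∀ P ∈ Pfam, ∀ᵐ ω ∂P, h ⬝ᵥ ΔS ω = 0}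
  zero_mem' P _ := by simp
  add_mem' ha hb P hP := by
    filter_upwards [ha P hP, hb P hP] with ω hωa hωb
    rw [add_dotProduct, hωa, hωb, add_zero]
  smul_mem' c h hh P hP := by
    filter_upwards [hh P hP] with ω hω
    rw [smul_dotProduct, hω, smul_zero]

variable (Pfam ΔS X) in
def robustLogMGF (h : ι → ℝ) : EReal :=
  ⨆ P ∈ Pfam, logMGFE P fun ω => X ω + ((h ⬝ᵥ ΔS ω : ℝ) : EReal)

theorem measurable_exp_add_dotProduct (hΔS : Measurable ΔS) (hX : Measurable X) (h : ι → ℝ) :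
    Measurable fun ω => EReal.exp (X ω + ((h ⬝ᵥ ΔS ω : ℝ) : EReal)) :=
  (hX.add (measurable_coe_real_ereal.comp (hΔS.const_dotProduct h))).ereal_exp

theorem robustLogMGF_add_of_mem_nullStrategies {h l : ι → ℝ}
    (hl : l ∈ nullStrategies Pfam ΔS) :
    robustLogMGF Pfam ΔS X (h + l) = robustLogMGF Pfam ΔS X h := by
  refine iSup_congr fun P => iSup_congr fun hP => congrArg ENNReal.log (lintegral_congr_ae ?_)
  filter_upwards [hl P hP] with ω hω
  rw [add_dotProduct, hω, add_zero]

theorem exists_mem_robustLogMGF_eq {W : Submodule ℝ (ι → ℝ)}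
    (hW : IsCompl (nullStrategies Pfam ΔS) W) (h : ι → ℝ) :
    ∃ w ∈ W, robustLogMGF Pfam ΔS X w = robustLogMGF Pfam ΔS X h := by
  obtain ⟨l, hl, w, hw, rfl⟩ := Submodule.mem_sup.1 (hW.sup_eq_top ▸ Submodule.mem_top : h ∈ _)
  exact ⟨w, hw, by rw [add_comm, robustLogMGF_add_of_mem_nullStrategies hl]⟩

theorem lowerSemicontinuous_robustLogMGF (hΔS : Measurable ΔS) (hX : Measurable X) :
    LowerSemicontinuous (robustLogMGF Pfam ΔS X) :=
  lowerSemicontinuous_biSup fun _ _ => ENNReal.continuous_log.comp_lowerSemicontinuous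
    (lowerSemicontinuous_lintegral
      (fun h => (measurable_exp_add_dotProduct hΔS hX h).aemeasurable)
      fun ω => ((EReal.continuous_exp_add_coe (X ω)).comp
        (continuous_id.dotProduct continuous_const)).lowerSemicontinuous)
    ENNReal.log_monotone

theorem lintegral_exp_le_of_robustLogMGF_le {P : Measure Ω} (hP : P ∈ Pfam) {h : ι → ℝ}
    {B : EReal} (hB : robustLogMGF Pfam ΔS X h ≤ B) :
    ∫⁻ ω, EReal.exp (X ω + ((h ⬝ᵥ ΔS ω : ℝ) : EReal)) ∂P ≤ EReal.exp B := by
  rw [← ENNReal.exp_log (∫⁻ _, _ ∂P)]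
  exact EReal.exp_monotone ((le_iSup₂_of_le P hP le_rfl).trans hB)

end Market

theorem NA.exists_measure_pos_of_not_mem {d : ℕ} {Pfam : Set (Measure Ω)}
    {ΔS : Ω → Fin d → ℝ} (hNA : NA Pfam ΔS) {g : Fin d → ℝ}
    (hg : g ∉ nullStrategies Pfam ΔS) : ∃ P ∈ Pfam, P {ω | 0 < g ⬝ᵥ ΔS ω} ≠ 0 := by
  by_contra! hpos
  have hpolar := hNA (-g) fun P hP => by
    change P {ω | (-g) ⬝ᵥ ΔS ω < 0} = 0
    simpa only [neg_dotProduct, neg_lt_zero] using hpos P hP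
  refine hg fun P hP => ae_iff.2 ?_
  have hnull : P {ω | (-g) ⬝ᵥ ΔS ω ≠ 0} = 0 := hpolar P hP
  simpa only [neg_dotProduct, neg_ne_zero] using hnull

theorem isBounded_inter_robustLogMGF_sublevel {d : ℕ} {Pfam : Set (Measure Ω)}
    {ΔS : Ω → Fin d → ℝ} {X : Ω → EReal} (hΔS : Measurable ΔS) (hNA : NA Pfam ΔS)
    (hX : Measurable X) (hXbot : ∀ ω, X ω ≠ ⊥) {W : Submodule ℝ (Fin d → ℝ)}
    (hW : Disjoint W (nullStrategies Pfam ΔS)) {B : EReal} (hB : B < ⊤) :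
    Bornology.IsBounded ((W : Set (Fin d → ℝ)) ∩ robustLogMGF Pfam ΔS X ⁻¹' Set.Iic B) := by
  by_contra hunb
  obtain ⟨w, g, hwK, hg, hnorm, hlim⟩ := exists_seq_tendsto_norm_atTop_of_not_isBounded hunb
  have hgW : g ∈ W := W.closed_of_finiteDimensional.mem_of_tendsto hlim
    (Eventually.of_forall fun n => W.smul_mem _ (hwK n).1)
  have hgL : g ∉ nullStrategies Pfam ΔS := fun hgL => by
    simp [Submodule.disjoint_def.1 hW g hgW hgL] at hg
  obtain ⟨P, hP, hPpos⟩ := hNA.exists_measure_pos_of_not_mem hgL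
  have hblowup := liminf_lintegral_eq_top_of_tendsto_top (μ := P) (l := (atTop : Filter ℕ))
    (fun n => (measurable_exp_add_dotProduct hΔS hX (w n)).aemeasurable)
    (measurableSet_lt measurable_const (hΔS.const_dotProduct g))
    hPpos fun ω hω => EReal.tendsto_exp_add_coe_atTop (hXbot ω)
      (tendsto_dotProduct_atTop_of_tendsto_smul hnorm hlim hω)
  have hbounded : liminf (fun n => ∫⁻ ω, EReal.exp (X ω + ((w n ⬝ᵥ ΔS ω : ℝ) : EReal)) ∂P)
      atTop ≤ EReal.exp B :=
    liminf_le_of_frequently_le' (Frequently.of_forall fun n =>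
      lintegral_exp_le_of_robustLogMGF_le hP (hwK n).2)
  rw [hblowup, top_le_iff, EReal.exp_eq_top_iff] at hbounded
  exact hB.ne hbounded

theorem one_period_existence_optimal_strategy_general {d : ℕ}
    (Pfam : Set (Measure Ω))
    (ΔS : Ω → Fin d → ℝ) (hΔS : Measurable ΔS) (hNA : NA Pfam ΔS)
    (X : Ω → EReal) (hX : Measurable X) (hXbot : ∀ ω, X ω ≠ ⊥) :
    ∃ hstar : Fin d → ℝ,
      (⨆ P ∈ Pfam, logMGFE P (fun ω => X ω + ((∑ i, hstar i * ΔS ω i : ℝ) : EReal))) =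
        ⨅ h : Fin d → ℝ, ⨆ P ∈ Pfam,
          logMGFE P (fun ω => X ω + ((∑ i, h i * ΔS ω i : ℝ) : EReal)) := by
  change ∃ hstar, robustLogMGF Pfam ΔS X hstar = ⨅ h, robustLogMGF Pfam ΔS X h
  set F := robustLogMGF Pfam ΔS X
  rcases (le_top : ⨅ h, F h ≤ ⊤).eq_or_lt with htop | hlt
  · exact ⟨0, le_antisymm (htop ▸ le_top) (iInf_le F 0)⟩
  obtain ⟨B, hinfB, hB⟩ := exists_between hlt
  obtain ⟨W, hW⟩ := (nullStrategies Pfam ΔS).exists_isCompl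
  have hFlsc := lowerSemicontinuous_robustLogMGF (Pfam := Pfam) hΔS hX
  have hK : IsCompact ((W : Set (Fin d → ℝ)) ∩ F ⁻¹' Set.Iic B) :=
    Metric.isCompact_of_isClosed_isBounded
      (W.closed_of_finiteDimensional.inter (hFlsc.isClosed_preimage B))
      (isBounded_inter_robustLogMGF_sublevel hΔS hNA hX hXbot hW.disjoint.symm hB)
  obtain ⟨h₀, hh₀⟩ := iInf_lt_iff.1 hinfB
  obtain ⟨w₀, hw₀, hFw₀⟩ := exists_mem_robustLogMGF_eq (X := X) hW h₀
  obtain ⟨a, -, hmin⟩ := (hFlsc.lowerSemicontinuousOn _).exists_isMinOn_of_isCompact_inter_Iic hK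
    ⟨w₀, hw₀, (hFw₀.trans_lt hh₀).le⟩
  refine ⟨a, le_antisymm (le_iInf fun h => ?_) (iInf_le F a)⟩
  obtain ⟨w, hw, hFw⟩ := exists_mem_robustLogMGF_eq (X := X) hW h
  exact (hmin hw).trans_eq hFw

/-- Existence of an optimal one-period strategy under `NA(𝒫)`. -/
theorem one_period_existence_optimal_strategy {d : ℕ}
    (Pfam : Set (Measure Ω)) (hne : Pfam.Nonempty) (hconv : ConvexFamily Pfam)
    (hprob : ∀ P ∈ Pfam, IsProbabilityMeasure P)
    (ΔS : Ω → Fin d → ℝ) (hΔS : Measurable ΔS) (hNA : NA Pfam ΔS)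
    (X : Ω → EReal) (hX : Measurable X) (hXbot : ∀ ω, X ω ≠ ⊥) :
    ∃ hstar : Fin d → ℝ,
      (⨆ P ∈ Pfam, logMGFE P (fun ω => X ω + ((∑ i, hstar i * ΔS ω i : ℝ) : EReal))) =
        ⨅ h : Fin d → ℝ, ⨆ P ∈ Pfam,
          logMGFE P (fun ω => X ω + ((∑ i, h i * ΔS ω i : ℝ) : EReal)) :=
  one_period_existence_optimal_strategy_general Pfam ΔS hΔS hNA X hX hXbot

end
end

section
/- Characterization of null strategies via the quasi-sure support: let L be the linear span of the 𝒫-quasi-sure support of ΔS (the smallest closed set of ℝ^d containing ΔS(ω) for 𝒫-quasi every ω). Then for h ∈ ℝ^d, h lies in the orthogonal complement L^⊥ if and only if h·ΔS = 0 𝒫-quasi-surely. -/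
open MeasureTheory ENNReal NNReal Real Filter Classical

noncomputable section

variable {Ω : Type*} [MeasurableSpace Ω]

theorem Polar.mono {Pfam : Set (Measure Ω)} {M N : Set Ω} (hN : Polar Pfam N) (hMN : M ⊆ N) :
    Polar Pfam M :=
  fun P hP => measure_mono_null hMN (hN P hP)

theorem subset_iff_polar_of_quasiSureSupport {X : Type*} [TopologicalSpace X]
    {Pfam : Set (Measure Ω)} {Y : Ω → X} {C F : Set X}
    (hCqs : Polar Pfam {ω | Y ω ∉ C})
    (hCmin : ∀ C' : Set X, IsClosed C' → Polar Pfam {ω | Y ω ∉ C'} → C ⊆ C')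
    (hF : IsClosed F) :
    C ⊆ F ↔ Polar Pfam {ω | Y ω ∉ F} :=
  ⟨fun hCF => hCqs.mono fun _ hωF hωC => hωF (hCF hωC), hCmin F hF⟩

theorem forall_mem_span_eq_zero_iff {R M N : Type*} [Semiring R] [AddCommMonoid M]
    [AddCommMonoid N] [Module R M] [Module R N] (f : M →ₗ[R] N) (s : Set M) :
    (∀ l ∈ Submodule.span R s, f l = 0) ↔ s ⊆ {x | f x = 0} :=
  Submodule.span_le (p := LinearMap.ker f)

theorem mem_orthogonal_span_support_iff_polar_general {d : ℕ}
    (Pfam : Set (Measure Ω))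
    (ΔS : Ω → Fin d → ℝ)
    (C : Set (Fin d → ℝ))
    (hCqs : Polar Pfam {ω | ΔS ω ∉ C})
    (hCmin : ∀ C' : Set (Fin d → ℝ), IsClosed C' → Polar Pfam {ω | ΔS ω ∉ C'} → C ⊆ C')
    (h : Fin d → ℝ) :
    (∀ l ∈ Submodule.span ℝ C, (∑ i, h i * l i) = 0) ↔
      Polar Pfam {ω | (∑ i, h i * ΔS ω i) ≠ 0} := by
  have hker : IsClosed {x : Fin d → ℝ | h ⬝ᵥ x = 0} :=
    isClosed_eq (continuous_const.dotProduct continuous_id) continuous_const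
  calc (∀ l ∈ Submodule.span ℝ C, (∑ i, h i * l i) = 0)
      ↔ C ⊆ {x | h ⬝ᵥ x = 0} := forall_mem_span_eq_zero_iff (dotProductBilin ℝ ℝ h) C
    _ ↔ Polar Pfam {ω | (∑ i, h i * ΔS ω i) ≠ 0} :=
      subset_iff_polar_of_quasiSureSupport hCqs hCmin hker

/-- Characterization of null strategies via the quasi-sure support (Lemma 2.6 of Nutz):
with `L` the linear span of the `𝒫`-quasi-sure support of `ΔS`, one has `h ∈ L^⊥` iff
`h·ΔS = 0` `𝒫`-quasi-surely. -/
theorem mem_orthogonal_span_support_iff_polar {d : ℕ}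
    (Pfam : Set (Measure Ω)) (hne : Pfam.Nonempty)
    (hprob : ∀ P ∈ Pfam, IsProbabilityMeasure P)
    (ΔS : Ω → Fin d → ℝ) (hΔS : Measurable ΔS)
    (C : Set (Fin d → ℝ)) (hC : IsClosed C)
    (hCqs : Polar Pfam {ω | ΔS ω ∉ C})
    (hCmin : ∀ C' : Set (Fin d → ℝ), IsClosed C' → Polar Pfam {ω | ΔS ω ∉ C'} → C ⊆ C')
    (h : Fin d → ℝ) :
    (∀ l ∈ Submodule.span ℝ C, (∑ i, h i * l i) = 0) ↔
      Polar Pfam {ω | (∑ i, h i * ΔS ω i) ≠ 0} :=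
  mem_orthogonal_span_support_iff_polar_general Pfam ΔS C hCqs hCmin h

end
end

section
/- Sion-type minimax with finite covering condition: let 𝒞 be a convex set, J : 𝒞 × ℝ^d → ℝ with J(·,h) concave for each h and J(Q,·) convex and continuous for each Q ∈ 𝒞. Suppose that for every c < inf_{h} sup_{Q∈𝒞} J(Q,h) there exists a finite set F ⊂ 𝒞 such that for every h ∈ ℝ^d there is Q ∈ F with J(Q,h) > c. Then inf over h ∈ ℝ^d of sup over Q ∈ 𝒞 of J(Q,h) equals sup over Q ∈ 𝒞 of inf over h ∈ ℝ^d of J(Q,h). -/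
/-!
Fix a real `c` below `inf_h sup_Q J` and a finite `F ⊆ C` covering level `c`. The diagonal point
`(c, …, c)` then lies outside the open, convex, upward closed set `{x ∈ ℝ^F | ∃ h, ∀ Q, J Q h < x Q}`
(convex because each `J Q` is convex), so a separating functional, normalized to a probability
vector `w`, gives `c ≤ ∑ w_Q J Q h` for every `h`. By concavity in `Q` the mixture `∑ w_Q • Q ∈ C`
guarantees `c` against every `h`, hence `sup_Q inf_h J ≥ c`.
-/

open MeasureTheory ENNReal NNReal Real Filter Classical

noncomputable section

variable {Ω : Type*} [MeasurableSpace Ω]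

open Finset in
theorem exists_mem_stdSimplex_forall_sum_lt_of_notMem {ι : Type*} [Fintype ι]
    {U : Set (ι → ℝ)} (hUo : IsOpen U) (hUc : Convex ℝ U) (hUn : U.Nonempty)
    (hUup : IsUpperSet U) {p : ι → ℝ} (hp : p ∉ U) :
    ∃ w ∈ stdSimplex ℝ ι, ∀ x ∈ U, ∑ i, w i * p i < ∑ i, w i * x i := by
  obtain ⟨φ, hφ⟩ := geometric_hahn_banach_point_open hUc hUo hp
  obtain ⟨x₀, hx₀⟩ := hUn
  have hφ_nonneg : ∀ y, 0 ≤ y → 0 ≤ φ y := by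
    intro y hy
    by_contra! hneg
    -- moving from `x₀` far enough in the direction `y` stays in `U` but pushes `φ` below `φ p`
    set t := (φ x₀ - φ p) / -φ y
    have ht : 0 ≤ t := div_nonneg (sub_nonneg.2 (hφ x₀ hx₀).le) (neg_nonneg.2 hneg.le)
    have hlt := hφ (x₀ + t • y) (hUup (le_add_of_nonneg_right (smul_nonneg ht hy)) hx₀)
    rw [map_add, map_smul, smul_eq_mul, div_mul_eq_mul_div, div_neg,
      mul_div_cancel_right₀ _ hneg.ne] at hlt
    linarith
  set v : ι → ℝ := fun i => φ fun j => if i = j then 1 else 0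
  have hφ_eq : ∀ x, φ x = ∑ i, v i * x i := fun x => by
    simpa [v, mul_comm] using φ.toLinearMap.pi_apply_eq_sum_univ x
  have hv : ∀ i, 0 ≤ v i := fun i => hφ_nonneg _ fun j => by positivity
  have hS : 0 < ∑ i, v i := by
    refine (sum_nonneg fun i _ => hv i).lt_of_ne fun hS => ?_
    have hv0 := (sum_eq_zero_iff_of_nonneg fun i _ => hv i).1 hS.symm
    have := hφ x₀ hx₀
    simp only [hφ_eq, hv0 _ (mem_univ _), zero_mul, sum_const_zero, lt_self_iff_false] at this
  have hw_sum : ∀ x : ι → ℝ, ∑ i, v i / (∑ j, v j) * x i = φ x / ∑ j, v j := fun x => by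
    rw [hφ_eq, sum_div]
    exact sum_congr rfl fun i _ => div_mul_eq_mul_div _ _ _
  refine ⟨fun i => v i / ∑ j, v j, ⟨fun i => div_nonneg (hv i) hS.le, ?_⟩, fun x hx => ?_⟩
  · rw [← sum_div, div_self hS.ne']
  · rw [hw_sum, hw_sum]
    exact div_lt_div_of_pos_right (hφ x hx) hS

open Finset in
theorem exists_mem_stdSimplex_forall_le_sum {ι H : Type*} [Fintype ι] [AddCommGroup H]
    [Module ℝ H] {f : ι → H → ℝ} (hf : ∀ i, ConvexOn ℝ Set.univ (f i)) {c : ℝ}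
    (hcover : ∀ h, ∃ i, c ≤ f i h) :
    ∃ w ∈ stdSimplex ℝ ι, ∀ h, c ≤ ∑ i, w i * f i h := by
  set U : Set (ι → ℝ) := {x | ∃ h, ∀ i, f i h < x i}
  have hUo : IsOpen U := by
    simp only [U, Set.ofPred_exists, Set.ofPred_forall]
    exact isOpen_iUnion fun h =>
      isOpen_iInter_of_finite fun i => isOpen_lt continuous_const (continuous_apply i)
  have hUc : Convex ℝ U := by
    rintro x ⟨h₁, hx⟩ y ⟨h₂, hy⟩ a b ha hb hab
    refine ⟨a • h₁ + b • h₂, fun i => ?_⟩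
    have hJensen := (hf i).2 (Set.mem_univ h₁) (Set.mem_univ h₂) ha hb hab
    have hx := hx i
    have hy := hy i
    simp only [smul_eq_mul, Pi.add_apply, Pi.smul_apply] at hJensen ⊢
    rcases ha.eq_or_lt with rfl | ha
    · rw [zero_add] at hab
      subst hab
      linarith
    · nlinarith [mul_pos ha (sub_pos.2 hx), mul_nonneg hb (sub_pos.2 hy).le]
  have hUup : IsUpperSet U := fun x y hxy ⟨h, hh⟩ => ⟨h, fun i => (hh i).trans_le (hxy i)⟩
  have hcU : (fun _ => c) ∉ U := fun ⟨h, hh⟩ =>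
    let ⟨i, hi⟩ := hcover h
    (hh i).not_ge hi
  obtain ⟨w, hw, hwU⟩ := exists_mem_stdSimplex_forall_sum_lt_of_notMem hUo hUc
    ⟨fun i => f i 0 + 1, 0, fun i => lt_add_one _⟩ hUup hcU
  refine ⟨w, hw, fun h => le_of_forall_pos_lt_add fun ε hε => ?_⟩
  have := hwU (fun i => f i h + ε) ⟨h, fun i => lt_add_of_pos_right _ hε⟩
  simpa only [mul_add, sum_add_distrib, ← sum_mul, hw.2, one_mul] using this

theorem exists_mem_forall_le_of_finset_cover {E H : Type*} [AddCommGroup E] [Module ℝ E]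
    [AddCommGroup H] [Module ℝ H] {C : Set E} {J : E → H → ℝ}
    (hconc : ∀ h, ConcaveOn ℝ C fun Q => J Q h) (hconv : ∀ Q ∈ C, ConvexOn ℝ Set.univ (J Q))
    {c : ℝ} {F : Finset E} (hFC : ↑F ⊆ C) (hF : ∀ h, ∃ Q ∈ F, c ≤ J Q h) :
    ∃ Q ∈ C, ∀ h, c ≤ J Q h := by
  obtain ⟨w, ⟨hw₀, hw₁⟩, hw⟩ := exists_mem_stdSimplex_forall_le_sum
    (f := fun Q : F => J Q) (fun Q => hconv Q (hFC Q.2)) fun h =>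
      let ⟨Q, hQF, hQ⟩ := hF h
      ⟨⟨Q, hQF⟩, hQ⟩
  refine ⟨∑ Q, w Q • (Q : E), (hconc 0).1.sum_mem (fun Q _ => hw₀ Q) hw₁ fun Q _ => hFC Q.2,
    fun h => (hw h).trans ?_⟩
  exact (hconc h).le_map_sum (fun Q _ => hw₀ Q) hw₁ fun Q _ => hFC Q.2

theorem sion_minimax_finite_cover_general
    {E : Type*} [AddCommGroup E] [Module ℝ E] {d : ℕ}
    (C : Set E) (J : E → (Fin d → ℝ) → ℝ)
    (hconc : ∀ h : Fin d → ℝ, ConcaveOn ℝ C (fun Q => J Q h))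
    (hconv : ∀ Q ∈ C, ConvexOn ℝ Set.univ (J Q))
    (hcover : ∀ c : ℝ, (c : EReal) < (⨅ h : Fin d → ℝ, ⨆ Q ∈ C, (J Q h : EReal)) →
      ∃ F : Finset E, ↑F ⊆ C ∧ ∀ h : Fin d → ℝ, ∃ Q ∈ F, c < J Q h) :
    (⨅ h : Fin d → ℝ, ⨆ Q ∈ C, (J Q h : EReal)) =
      ⨆ Q ∈ C, ⨅ h : Fin d → ℝ, (J Q h : EReal) := by
  refine le_antisymm (EReal.ge_of_forall_gt_iff_ge.1 fun c hc => ?_) ?_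
  · obtain ⟨F, hFC, hF⟩ := hcover c hc
    obtain ⟨Q, hQC, hQ⟩ := exists_mem_forall_le_of_finset_cover hconc hconv hFC
      fun h => (hF h).imp fun _ => And.imp_right le_of_lt
    exact le_iSup₂_of_le Q hQC (le_iInf fun h => EReal.coe_le_coe (hQ h))
  · exact iSup₂_le fun Q hQ => le_iInf fun h => iInf_le_of_le h (le_iSup₂_of_le Q hQ le_rfl)

/-- Sion-type minimax theorem with a finite covering condition: for `J : 𝒞 × ℝ^d → ℝ`
concave in the first and convex-continuous in the second variable, if every level
`c < inf sup` admits a finite family `F ⊆ 𝒞` such that each `h` satisfies `J(Q,h) > c` for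
some `Q ∈ F`, then `inf_h sup_{Q∈𝒞} J = sup_{Q∈𝒞} inf_h J`. -/
theorem sion_minimax_finite_cover
    {E : Type*} [AddCommGroup E] [Module ℝ E] {d : ℕ}
    (C : Set E) (hC : Convex ℝ C) (J : E → (Fin d → ℝ) → ℝ)
    (hconc : ∀ h : Fin d → ℝ, ConcaveOn ℝ C (fun Q => J Q h))
    (hconv : ∀ Q ∈ C, ConvexOn ℝ Set.univ (J Q))
    (hcont : ∀ Q ∈ C, Continuous (J Q))
    (hcover : ∀ c : ℝ, (c : EReal) < (⨅ h : Fin d → ℝ, ⨆ Q ∈ C, (J Q h : EReal)) →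
      ∃ F : Finset E, ↑F ⊆ C ∧ ∀ h : Fin d → ℝ, ∃ Q ∈ F, c < J Q h) :
    (⨅ h : Fin d → ℝ, ⨆ Q ∈ C, (J Q h : EReal)) =
      ⨆ Q ∈ C, ⨅ h : Fin d → ℝ, (J Q h : EReal) :=
  sion_minimax_finite_cover_general C J hconc hconv hcover

end
end

section
/- In the one-period model under NA(𝒫), for any measurable X : Ω → ℝ and Y : Ω → [0,∞), the origin lies in the relative interior of the set { E_Q[ΔS] : Q ∈ 𝒞 } ⊂ ℝ^d, where 𝒞 := { Q : E_Q[|X| + |ΔS| + Y] + H(Q,𝒫) < ∞ }; in particular there exist measures in 𝒞 that are martingale measures for ΔS, so the set ℳ of Q ∈ 𝒞 with E_Q[ΔS] = 0 is nonempty. -/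
open MeasureTheory ENNReal NNReal Real Filter Classical

noncomputable section

variable {Ω : Type*} [MeasurableSpace Ω]

/-!
Let `𝒟 ⊆ 𝒞` consist of the probability measures with bounded density with respect to some
`P ∈ 𝒫` and finite `E_Q[|X| + |ΔS| + Y]`: a bounded density gives finite entropy, and `𝒟` is
convex because `𝒫` is. If a linear functional `φ` is nonnegative on the barycenters of `𝒟`, then
`φ(ΔS) ≥ 0` `𝒫`-q.s., for otherwise restricting some `P ∈ 𝒫` to `{φ(ΔS) < 0}` and reweighting it
by `(1 + |X| + |ΔS| + Y)⁻¹` produces a measure of `𝒟` with `E_Q[φ(ΔS)] < 0`. By NA, `φ(ΔS) = 0`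
q.s., and since finite entropy forces `Q ≪ P` for some `P ∈ 𝒫`, `φ` vanishes on all barycenters
of `𝒞`. By the supporting hyperplane theorem, applied in the common kernel of such `φ`, this
puts `0` in the relative interior.
-/

open Set

section ConvexAnalysis

variable {E : Type*} [NormedAddCommGroup E] [NormedSpace ℝ E] [FiniteDimensional ℝ E] {C : Set E}

theorem Convex.exists_dual_ne_zero_nonneg_of_zero_notMem_interior (hC : Convex ℝ C)
    (hne : C.Nonempty) (h0 : (0 : E) ∉ interior C) :
    ∃ φ : Module.Dual ℝ E, φ ≠ 0 ∧ ∀ y ∈ C, 0 ≤ φ y := by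
  by_cases hint : (interior C).Nonempty
  · obtain ⟨f, hf, hfC⟩ := geometric_hahn_banach_of_nonempty_interior_point hC h0 hint
    refine ⟨-(f : E →ₗ[ℝ] ℝ), fun h => hf ?_, fun y hy => by simpa using hfC y hy⟩
    ext x
    simpa using congr($h x)
  · obtain ⟨p, hp⟩ := hne
    have hdir : (affineSpan ℝ C).direction < ⊤ := by
      rw [lt_top_iff_ne_top, Ne, AffineSubspace.direction_eq_top_iff_of_nonempty
        ⟨p, subset_affineSpan ℝ C hp⟩, ← hC.interior_nonempty_iff_affineSpan_eq_top]
      exact hint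
    obtain ⟨ψ, hψ, hker⟩ := (affineSpan ℝ C).direction.exists_le_ker_of_lt_top hdir
    have hconst : ∀ y ∈ C, ψ y = ψ p := fun y hy => by
      have := hker (AffineSubspace.vsub_mem_direction (subset_affineSpan ℝ C hy)
        (subset_affineSpan ℝ C hp))
      simpa [sub_eq_zero] using this
    rcases le_total 0 (ψ p) with hψp | hψp
    · exact ⟨ψ, hψ, fun y hy => (hconst y hy).symm ▸ hψp⟩
    · exact ⟨-ψ, neg_ne_zero.2 hψ, fun y hy => by simpa [hconst y hy] using hψp⟩

theorem mem_intrinsicInterior_of_mem_interior_subtype {𝕜 : Type*} [Ring 𝕜] {V : Type*}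
    [AddCommGroup V] [Module 𝕜 V] [TopologicalSpace V] (W : Submodule 𝕜 V) {C D : Set V}
    (hCD : C ⊆ D) (hDW : D ⊆ W) {x : W} (hx : x ∈ interior ((↑) ⁻¹' C : Set W)) :
    (x : V) ∈ intrinsicInterior 𝕜 D := by
  have hspan : affineSpan 𝕜 D ≤ W.toAffineSubspace :=
    affineSpan_le.2 fun y hy => Submodule.mem_toAffineSubspace.2 (hDW hy)
  let ι : affineSpan 𝕜 D → W := fun y => ⟨y, Submodule.mem_toAffineSubspace.1 (hspan y.2)⟩
  have hι : Continuous ι := continuous_subtype_val.subtype_mk _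
  let C' : Set W := (↑) ⁻¹' C
  have hxD : (x : V) ∈ D := hCD (interior_subset (s := C') hx)
  refine ⟨⟨x, subset_affineSpan 𝕜 D hxD⟩, ?_, rfl⟩
  exact interior_maximal (t := ι ⁻¹' interior C')
    (fun y hy => hCD (interior_subset (s := C') hy)) (isOpen_interior.preimage hι) hx

theorem zero_mem_intrinsicInterior_of_forall_dual_nonneg {D : Set E} (hC : Convex ℝ C)
    (hne : C.Nonempty) (hCD : C ⊆ D)
    (h : ∀ φ : Module.Dual ℝ E, (∀ y ∈ C, 0 ≤ φ y) → ∀ x ∈ D, φ x = 0) :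
    (0 : E) ∈ intrinsicInterior ℝ D := by
  -- No nonzero functional on `W` is nonnegative on `C`, so `C` is a neighbourhood of `0` in `W`.
  let W : Submodule ℝ E := ⨅ (φ : Module.Dual ℝ E) (_ : ∀ y ∈ C, 0 ≤ φ y), LinearMap.ker φ
  have hDW : D ⊆ W := fun x hx => by
    simp only [W, SetLike.mem_coe, Submodule.mem_iInf, LinearMap.mem_ker]
    exact fun φ hφ => h φ hφ x hx
  obtain ⟨p, hp⟩ := hne
  have h0 : (0 : W) ∈ interior ((↑) ⁻¹' C : Set W) := by
    by_contra h0
    obtain ⟨ψ, hψ, hψC⟩ := (hC.linear_preimage W.subtype)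
      |>.exists_dual_ne_zero_nonneg_of_zero_notMem_interior ⟨⟨p, hDW (hCD hp)⟩, hp⟩ h0
    obtain ⟨φ, rfl⟩ := LinearMap.exists_extend ψ
    have hφC : ∀ y ∈ C, 0 ≤ φ y := fun y hy => hψC ⟨y, hDW (hCD hy)⟩ hy
    refine hψ (LinearMap.ext fun x => ?_)
    have hx := x.2
    simp only [W, Submodule.mem_iInf, LinearMap.mem_ker] at hx
    simpa using hx φ hφC
  simpa using mem_intrinsicInterior_of_mem_interior_subtype W hCD hDW h0

end ConvexAnalysis

lemma relEntropy_ne_top_of_le_smul {Q P : Measure Ω} [IsFiniteMeasure P] {c : ℝ≥0}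
    (hle : Q ≤ (c : ℝ≥0∞) • P) : relEntropy Q P ≠ ⊤ := by
  rw [relEntropy, if_pos (Measure.absolutelyContinuous_of_le_smul hle)]
  have hdens : Q.rnDeriv P ≤ᵐ[P] fun _ => (c : ℝ≥0∞) := by
    refine ae_le_of_forall_setLIntegral_le_of_sigmaFinite (Measure.measurable_rnDeriv Q P)
      fun s _ _ => ?_
    calc ∫⁻ x in s, Q.rnDeriv P x ∂P ≤ Q s := Measure.setLIntegral_rnDeriv_le s
      _ ≤ ((c : ℝ≥0∞) • P) s := hle s
      _ = ∫⁻ _ in s, (c : ℝ≥0∞) ∂P := by simp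
  have hbound : ∀ᵐ ω ∂P, ENNReal.ofReal ((Q.rnDeriv P ω).toReal * log (Q.rnDeriv P ω).toReal + 1)
      ≤ ENNReal.ofReal (c * c + 1) := by
    filter_upwards [hdens] with ω hω
    set x := (Q.rnDeriv P ω).toReal
    have hx : 0 ≤ x := ENNReal.toReal_nonneg
    have hxc : x ≤ c := by simpa [x] using ENNReal.toReal_mono ENNReal.coe_ne_top hω
    have : x * log x ≤ x * x := mul_le_mul_of_nonneg_left (log_le_self hx) hx
    exact ENNReal.ofReal_le_ofReal (by nlinarith)
  refine ENNReal.sub_ne_top (ne_top_of_le_ne_top ?_ (lintegral_mono_ae hbound))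
  simp [ENNReal.mul_eq_top]

lemma exists_absolutelyContinuous_of_robustEntropy_ne_top {Q : Measure Ω}
    {Pfam : Set (Measure Ω)} (h : robustEntropy Q Pfam ≠ ⊤) : ∃ P ∈ Pfam, Q ≪ P := by
  by_contra! hac
  exact h (iInf₂_eq_top.2 fun P hP => if_neg (hac P hP))

lemma exists_isProbabilityMeasure_le_smul_lintegral_ne_top (μ : Measure Ω) [IsFiniteMeasure μ]
    [NeZero μ] {g : Ω → ℝ≥0∞} (hg : Measurable g) (hg_top : ∀ ω, g ω ≠ ⊤) :
    ∃ Q : Measure Ω, IsProbabilityMeasure Q ∧ (∃ c : ℝ≥0, Q ≤ (c : ℝ≥0∞) • μ) ∧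
      ∫⁻ ω, g ω ∂Q ≠ ⊤ := by
  set ρ : Ω → ℝ≥0∞ := fun ω => (1 + g ω)⁻¹
  have hρ : Measurable ρ := (hg.const_add 1).inv
  set m := μ.withDensity ρ with hm
  have hmμ : m ≤ μ := by
    calc m ≤ μ.withDensity 1 :=
          withDensity_mono (ae_of_all _ fun ω => ENNReal.inv_le_one.2 le_self_add)
      _ = μ := withDensity_one
  have : IsFiniteMeasure m := isFiniteMeasure_of_le μ hmμ
  have : NeZero m := ⟨fun h => by
    rw [hm, withDensity_eq_zero_iff hρ.aemeasurable] at h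
    exact NeZero.ne μ (by simpa [Filter.EventuallyEq, ρ, hg_top] using h)⟩
  have hZ : (m univ)⁻¹ ≠ ⊤ := ENNReal.inv_ne_top.2 (NeZero.ne _)
  refine ⟨(m univ)⁻¹ • m, inferInstance, ⟨((m univ)⁻¹).toNNReal, ?_⟩, ?_⟩
  · rw [ENNReal.coe_toNNReal hZ]
    exact smul_le_smul_left _ hmμ
  · rw [lintegral_smul_measure, hm, lintegral_withDensity_eq_lintegral_mul _ hρ hg]
    refine ENNReal.mul_ne_top hZ (ne_top_of_le_ne_top (measure_ne_top μ univ) ?_)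
    calc ∫⁻ ω, (ρ * g) ω ∂μ ≤ ∫⁻ _, 1 ∂μ := lintegral_mono fun ω =>
          (ENNReal.inv_mul_le_iff (by simp) (by simp [hg_top ω])).2 (by simp)
      _ = μ univ := lintegral_one

def barycenters {ι : Type*} (𝒬 : Set (Measure Ω)) (ΔS : Ω → ι → ℝ) : Set (ι → ℝ) :=
  {x | ∃ Q ∈ 𝒬, (∀ i, Integrable (fun ω => ΔS ω i) Q) ∧ x = fun i => ∫ ω, ΔS ω i ∂Q}

section Barycenters

variable {ι : Type*} {𝒬 : Set (Measure Ω)} {ΔS : Ω → ι → ℝ}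

lemma barycenters_mono {𝒬' : Set (Measure Ω)} (h : 𝒬 ⊆ 𝒬') :
    barycenters 𝒬 ΔS ⊆ barycenters 𝒬' ΔS :=
  fun _ ⟨Q, hQ, hint, hx⟩ => ⟨Q, h hQ, hint, hx⟩

lemma ConvexFamily.convex_barycenters (h𝒬 : ConvexFamily 𝒬) : Convex ℝ (barycenters 𝒬 ΔS) := by
  rintro _ ⟨Q₁, hQ₁, hi₁, rfl⟩ _ ⟨Q₂, hQ₂, hi₂, rfl⟩ a b ha hb hab
  set t : ℝ≥0 := a.toNNReal
  have ht : t ≤ 1 := by simpa [t] using hab ▸ le_add_of_nonneg_right hb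
  have hs : ((1 - t : ℝ≥0) : ℝ) = b := by rw [NNReal.coe_sub ht]; simp [t, ha]; linarith
  have hint : ∀ (c : ℝ≥0) Q i, Integrable (fun ω => ΔS ω i) Q →
      Integrable (fun ω => ΔS ω i) ((c : ℝ≥0∞) • Q) := fun c Q i h => h.smul_measure coe_ne_top
  refine ⟨_, h𝒬 Q₁ hQ₁ Q₂ hQ₂ t ht, fun i => (hint _ _ i (hi₁ i)).add_measure (hint _ _ i (hi₂ i)),
    funext fun i => ?_⟩
  rw [integral_add_measure (hint _ _ i (hi₁ i)) (hint _ _ i (hi₂ i)), integral_smul_measure,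
    integral_smul_measure, ENNReal.coe_toReal, ENNReal.coe_toReal, hs, Real.coe_toNNReal a ha]
  rfl

lemma apply_barycenter [Fintype ι] {Q : Measure Ω} (hint : ∀ i, Integrable (fun ω => ΔS ω i) Q)
    (φ : Module.Dual ℝ (ι → ℝ)) :
    φ (fun i => ∫ ω, ΔS ω i ∂Q) = ∫ ω, φ (ΔS ω) ∂Q := by
  rw [show (fun i => ∫ ω, ΔS ω i ∂Q) = ∫ ω, ΔS ω ∂Q from
    funext fun i => (eval_integral hint i).symm]
  exact ((LinearMap.toContinuousLinearMap φ).integral_comp_comm (Integrable.of_eval hint)).symm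

end Barycenters

def boundedDensityProbabilities (Pfam : Set (Measure Ω)) (g : Ω → ℝ≥0∞) : Set (Measure Ω) :=
  {Q | IsProbabilityMeasure Q ∧ ∫⁻ ω, g ω ∂Q ≠ ⊤ ∧ ∃ P ∈ Pfam, ∃ c : ℝ≥0, Q ≤ (c : ℝ≥0∞) • P}

section BoundedDensity

variable {Pfam : Set (Measure Ω)} {g : Ω → ℝ≥0∞}

lemma ConvexFamily.boundedDensityProbabilities (hconv : ConvexFamily Pfam) :
    ConvexFamily (boundedDensityProbabilities Pfam g) := by
  rintro Q₁ ⟨hQ₁, hg₁, P₁, hP₁, c₁, hc₁⟩ Q₂ ⟨hQ₂, hg₂, P₂, hP₂, c₂, hc₂⟩ t ht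
  set c : ℝ≥0 := max c₁ c₂
  have hle : ∀ {Q P : Measure Ω} {c' : ℝ≥0}, c' ≤ c → Q ≤ (c' : ℝ≥0∞) • P → Q ≤ (c : ℝ≥0∞) • P :=
    fun hc' hQ => hQ.trans (IsOrderedSMul.smul_le_smul_right _ _ (ENNReal.coe_le_coe.2 hc') _)
  refine ⟨⟨?_⟩, ?_, _, hconv P₁ hP₁ P₂ hP₂ t ht, c, ?_⟩
  · simp [ht]
  · rw [lintegral_add_measure, lintegral_smul_measure, lintegral_smul_measure]
    exact ENNReal.add_ne_top.2
      ⟨ENNReal.mul_ne_top coe_ne_top hg₁, ENNReal.mul_ne_top coe_ne_top hg₂⟩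
  · calc (t : ℝ≥0∞) • Q₁ + ((1 - t : ℝ≥0) : ℝ≥0∞) • Q₂
        ≤ (t : ℝ≥0∞) • ((c : ℝ≥0∞) • P₁) + ((1 - t : ℝ≥0) : ℝ≥0∞) • ((c : ℝ≥0∞) • P₂) :=
          add_le_add (smul_le_smul_left _ (hle (le_max_left _ _) hc₁))
            (smul_le_smul_left _ (hle (le_max_right _ _) hc₂))
      _ = (c : ℝ≥0∞) • ((t : ℝ≥0∞) • P₁ + ((1 - t : ℝ≥0) : ℝ≥0∞) • P₂) := by
          rw [smul_add, smul_comm (c : ℝ≥0∞), smul_comm (c : ℝ≥0∞)]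

lemma exists_mem_boundedDensityProbabilities_ae_mem (hfin : ∀ P ∈ Pfam, IsFiniteMeasure P)
    (hg : Measurable g) (hg_top : ∀ ω, g ω ≠ ⊤) {A : Set Ω} (hA : MeasurableSet A)
    (hAP : ¬ Polar Pfam A) : ∃ Q ∈ boundedDensityProbabilities Pfam g, ∀ᵐ ω ∂Q, ω ∈ A := by
  obtain ⟨P, hP, hPA⟩ : ∃ P ∈ Pfam, P A ≠ 0 := by simpa [Polar] using hAP
  have := hfin P hP
  have : NeZero (P.restrict A) := ⟨by simpa [Measure.restrict_eq_zero] using hPA⟩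
  obtain ⟨Q, hQ, ⟨c, hc⟩, hgQ⟩ :=
    exists_isProbabilityMeasure_le_smul_lintegral_ne_top (P.restrict A) hg hg_top
  exact ⟨Q, ⟨hQ, hgQ, P, hP, c, hc.trans (smul_le_smul_left _ Measure.restrict_le_self)⟩,
    (Measure.absolutelyContinuous_of_le_smul hc).ae_le (ae_restrict_mem hA)⟩

lemma robustEntropy_ne_top_of_mem_boundedDensityProbabilities
    (hfin : ∀ P ∈ Pfam, IsFiniteMeasure P) {Q : Measure Ω}
    (hQ : Q ∈ boundedDensityProbabilities Pfam g) : robustEntropy Q Pfam ≠ ⊤ := by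
  obtain ⟨-, -, P, hP, c, hc⟩ := hQ
  have := hfin P hP
  exact ne_top_of_le_ne_top (relEntropy_ne_top_of_le_smul hc) (iInf₂_le P hP)

end BoundedDensity

lemma NA.polar_ne_zero_of_polar_neg {d : ℕ} {Pfam : Set (Measure Ω)} {ΔS : Ω → Fin d → ℝ}
    (hNA : NA Pfam ΔS) (φ : Module.Dual ℝ (Fin d → ℝ))
    (hφ : Polar Pfam {ω | φ (ΔS ω) < 0}) : Polar Pfam {ω | φ (ΔS ω) ≠ 0} := by
  obtain ⟨h, hh⟩ : ∃ h : Fin d → ℝ, ∀ x, φ x = ∑ i, h i * x i := ⟨_, fun x => by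
    rw [LinearMap.pi_apply_eq_sum_univ φ x]
    exact Finset.sum_congr rfl fun i _ => mul_comm _ _⟩
  simp only [hh] at hφ ⊢
  exact hNA h hφ

section Duality

variable {ι : Type*} [Fintype ι] {Pfam : Set (Measure Ω)} {ΔS : Ω → ι → ℝ}
  (φ : Module.Dual ℝ (ι → ℝ))

lemma polar_neg_of_forall_barycenter_nonneg (hfin : ∀ P ∈ Pfam, IsFiniteMeasure P)
    {g : Ω → ℝ≥0∞} (hg : Measurable g) (hg_top : ∀ ω, g ω ≠ ⊤) (hΔS : Measurable ΔS)
    (hint : ∀ Q ∈ boundedDensityProbabilities Pfam g, ∀ i, Integrable (fun ω => ΔS ω i) Q)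
    (hφ : ∀ x ∈ barycenters (boundedDensityProbabilities Pfam g) ΔS, 0 ≤ φ x) :
    Polar Pfam {ω | φ (ΔS ω) < 0} := by
  by_contra hA
  have hφΔS : Measurable fun ω => φ (ΔS ω) :=
    (LinearMap.continuous_of_finiteDimensional φ).measurable.comp hΔS
  obtain ⟨Q, hQ, hQA⟩ := exists_mem_boundedDensityProbabilities_ae_mem hfin hg hg_top
    (measurableSet_lt hφΔS measurable_const) hA
  have := hQ.1
  obtain ⟨ω, hω, hle⟩ := exists_notMem_null_integral_le
    ((LinearMap.toContinuousLinearMap φ).integrable_comp (Integrable.of_eval (hint Q hQ)))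
    (ae_iff.1 hQA)
  have hbary := hφ _ ⟨Q, hQ, hint Q hQ, rfl⟩
  rw [apply_barycenter (hint Q hQ)] at hbary
  exact hω (not_lt.2 (hbary.trans hle))

lemma apply_eq_zero_of_mem_barycenters (hφ : Polar Pfam {ω | φ (ΔS ω) ≠ 0})
    {𝒬 : Set (Measure Ω)} (h𝒬 : ∀ Q ∈ 𝒬, ∃ P ∈ Pfam, Q ≪ P) {x : ι → ℝ}
    (hx : x ∈ barycenters 𝒬 ΔS) : φ x = 0 := by
  obtain ⟨Q, hQ, hint, rfl⟩ := hx
  obtain ⟨P, hP, hQP⟩ := h𝒬 Q hQ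
  rw [apply_barycenter hint]
  exact integral_eq_zero_of_ae (hQP.ae_le (ae_iff.2 (by simpa using hφ P hP)))

end Duality

theorem NA.zero_mem_intrinsicInterior_barycenters {d : ℕ} {Pfam : Set (Measure Ω)}
    (hne : Pfam.Nonempty) (hconv : ConvexFamily Pfam)
    (hprob : ∀ P ∈ Pfam, IsProbabilityMeasure P) {ΔS : Ω → Fin d → ℝ} (hΔS : Measurable ΔS)
    (hNA : NA Pfam ΔS) {g : Ω → ℝ≥0∞} (hg : Measurable g) (hg_top : ∀ ω, g ω ≠ ⊤)
    (hΔSg : ∀ ω i, ENNReal.ofReal |ΔS ω i| ≤ g ω) {𝒞 : Set (Measure Ω)}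
    (h𝒞 : boundedDensityProbabilities Pfam g ⊆ 𝒞) (h𝒞ac : ∀ Q ∈ 𝒞, ∃ P ∈ Pfam, Q ≪ P) :
    (0 : Fin d → ℝ) ∈ intrinsicInterior ℝ (barycenters 𝒞 ΔS) := by
  have hfin : ∀ P ∈ Pfam, IsFiniteMeasure P := fun P hP => by have := hprob P hP; infer_instance
  have hint : ∀ Q ∈ boundedDensityProbabilities Pfam g, ∀ i, Integrable (fun ω => ΔS ω i) Q :=
    fun Q hQ i => ⟨(measurable_pi_apply i |>.comp hΔS).aestronglyMeasurable,
      (lintegral_mono fun ω => (Real.enorm_eq_ofReal_abs _).trans_le (hΔSg ω i)).trans_lt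
        hQ.2.1.lt_top⟩
  refine zero_mem_intrinsicInterior_of_forall_dual_nonneg
    hconv.boundedDensityProbabilities.convex_barycenters ?_ (barycenters_mono h𝒞)
    fun φ hφ _ => apply_eq_zero_of_mem_barycenters φ (hNA.polar_ne_zero_of_polar_neg φ
      (polar_neg_of_forall_barycenter_nonneg φ hfin hg hg_top hΔS hint hφ)) h𝒞ac
  obtain ⟨P, hP⟩ := hne
  have := hprob P hP
  obtain ⟨Q, hQ, -⟩ := exists_mem_boundedDensityProbabilities_ae_mem hfin hg hg_top
    MeasurableSet.univ fun h => by simpa using h P hP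
  exact ⟨_, Q, hQ, hint Q hQ, rfl⟩

/-- Under `NA(𝒫)`, the origin lies in the relative interior of the set of barycenters
`{E_Q[ΔS] : Q ∈ 𝒞}` with `𝒞 = {Q : E_Q[|X|+|ΔS|+Y] + H(Q,𝒫) < ∞}`; in particular the set
of such martingale measures is nonempty. -/
theorem zero_mem_intrinsicInterior_barycenters {d : ℕ}
    (Pfam : Set (Measure Ω)) (hne : Pfam.Nonempty) (hconv : ConvexFamily Pfam)
    (hprob : ∀ P ∈ Pfam, IsProbabilityMeasure P)
    (ΔS : Ω → Fin d → ℝ) (hΔS : Measurable ΔS) (hNA : NA Pfam ΔS)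
    (X : Ω → ℝ) (hX : Measurable X) (Y : Ω → ℝ) (hY : Measurable Y) :
    letI Cset : Set (Measure Ω) := {Q | IsProbabilityMeasure Q ∧
        (∫⁻ ω, (ENNReal.ofReal |X ω| + ENNReal.ofReal (∑ i, |ΔS ω i|)
            + ENNReal.ofReal (Y ω)) ∂Q) ≠ ⊤ ∧
        robustEntropy Q Pfam ≠ ⊤}
    (0 ∈ intrinsicInterior ℝ {x : Fin d → ℝ | ∃ Q ∈ Cset,
        (∀ i, Integrable (fun ω => ΔS ω i) Q) ∧ x = fun i => ∫ ω, ΔS ω i ∂Q}) ∧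
    (∃ Q ∈ Cset, (∀ i, Integrable (fun ω => ΔS ω i) Q) ∧ ∀ i, (∫ ω, ΔS ω i ∂Q) = 0) := by
  set g : Ω → ℝ≥0∞ := fun ω =>
    ENNReal.ofReal |X ω| + ENNReal.ofReal (∑ i, |ΔS ω i|) + ENNReal.ofReal (Y ω)
  have hΔSg : ∀ ω i, ENNReal.ofReal |ΔS ω i| ≤ g ω := fun ω i =>
    (ENNReal.ofReal_le_ofReal (Finset.single_le_sum (fun j _ => abs_nonneg (ΔS ω j))
      (Finset.mem_univ i))).trans (le_add_self.trans le_self_add)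
  have h0 := hNA.zero_mem_intrinsicInterior_barycenters hne hconv hprob hΔS (by fun_prop)
    (by simp [g]) hΔSg (𝒞 := {Q | IsProbabilityMeasure Q ∧ ∫⁻ ω, g ω ∂Q ≠ ⊤ ∧
      robustEntropy Q Pfam ≠ ⊤})
    (fun Q hQ => ⟨hQ.1, hQ.2.1, robustEntropy_ne_top_of_mem_boundedDensityProbabilities
      (fun P hP => by have := hprob P hP; infer_instance) hQ⟩)
    fun Q hQ => exists_absolutelyContinuous_of_robustEntropy_ne_top hQ.2.2
  obtain ⟨Q, hQ, hQi, hQ0⟩ := intrinsicInterior_subset h0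
  exact ⟨h0, Q, hQ, hQi, fun i => (congr_fun hQ0 i).symm⟩

end
end
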